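/- arXiv:2008.13297 — 10 statements merged into one kernel-verified Lean document; each statement's English description precedes it below -/
import Mathlib

section
/- Let α ∈ Δ^{re} be a positive real root with coordinates (k₁,…,k_{r+1}), and suppose k_{r+1} ≥ 1. Then k_i ≤ k_{r+1} for every i = 1,…,r. -/
/-!
Every simple reflection except `w_{r+1}` fixes the last coordinate, and `w_i` (`i ≤ r`) replaces
`k_i` by `k_{r+1} - k_i`. Hence `w_i α` is a real root with last coordinate `k_{r+1} ≥ 1`; as every
real root is positive or negative, `w_i α` is positive, i.e. `k_i ≤ k_{r+1}`.

That real roots have a sign is Tits' argument for Coxeter groups: by induction on the word length,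
`ℓ(g) ≤ ℓ(g s_a)` implies `0 ≤ g α_a`. Choose `b` with `ℓ(g s_b) < ℓ(g)` and write `g = v u` with
`u` a word in `s_a, s_b`, `ℓ(g) = ℓ(v) + ℓ(u)` and `ℓ(v)` minimal. Then neither `s_a` nor `s_b`
shortens `v`, so `v α_a, v α_b ≥ 0` by induction, while a rank-two computation (`s_a, s_b` commute
or satisfy the braid relation) shows `u α_a ∈ ℕ α_a + ℕ α_b`.
-/

open Finset

/-- The fundamental reflection `w_i` as a function on `ℤ^{r+1}`. -/
def wFun (r : ℕ) (i : Fin (r + 1)) (k : Fin (r + 1) → ℤ) : Fin (r + 1) → ℤ :=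
  fun j =>
    if j = i then
      if i = Fin.last r then (∑ l : Fin r, k l.castSucc) - k (Fin.last r)
      else k (Fin.last r) - k i
    else k j

lemma wFun_apply_ne (r : ℕ) (i : Fin (r + 1)) (k : Fin (r + 1) → ℤ) {j : Fin (r + 1)}
    (h : j ≠ i) : wFun r i k j = k j := by
  simp [wFun, h]

lemma wFun_involutive (r : ℕ) (i : Fin (r + 1)) : Function.Involutive (wFun r i) := by
  intro k
  funext j
  by_cases hj : j = i
  · subst hj
    by_cases hl : j = Fin.last r
    · subst hl
      have h1 : ∀ l : Fin r, wFun r (Fin.last r) k l.castSucc = k l.castSucc := fun l =>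
        wFun_apply_ne _ _ _ (Fin.castSucc_lt_last l).ne
      have h0 : wFun r (Fin.last r) k (Fin.last r)
          = (∑ l : Fin r, k l.castSucc) - k (Fin.last r) := by
        simp [wFun]
      have h2 : wFun r (Fin.last r) (wFun r (Fin.last r) k) (Fin.last r)
          = (∑ l : Fin r, wFun r (Fin.last r) k l.castSucc)
              - wFun r (Fin.last r) k (Fin.last r) := by
        simp [wFun]
      rw [h2, h0]
      simp only [h1]
      ring
    · have hlast : Fin.last r ≠ j := fun h => hl h.symm
      have h1 : wFun r j k (Fin.last r) = k (Fin.last r) := wFun_apply_ne _ _ _ hlast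
      have h0 : wFun r j k j = k (Fin.last r) - k j := by
        simp [wFun, hl]
      have h2 : wFun r j (wFun r j k) j
          = wFun r j k (Fin.last r) - wFun r j k j := by
        simp [wFun, hl]
      rw [h2, h1, h0]
      ring
  · rw [wFun_apply_ne _ _ _ hj, wFun_apply_ne _ _ _ hj]

/-- The fundamental reflection `w_i` as a permutation of `ℤ^{r+1}`. -/
def wRefl (r : ℕ) (i : Fin (r + 1)) : Equiv.Perm (Fin (r + 1) → ℤ) :=
  (wFun_involutive r i).toPerm

/-- The Weyl group `W = ⟨w₁, …, w_{r+1}⟩`. -/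
def weylW (r : ℕ) : Subgroup (Equiv.Perm (Fin (r + 1) → ℤ)) :=
  Subgroup.closure (Set.range fun i : Fin (r + 1) => wRefl r i)

/-- The set of real roots `Δ^{re} = W·{e₁, …, e_{r+1}}`. -/
def realRoots (r : ℕ) : Set (Fin (r + 1) → ℤ) :=
  {α | ∃ w ∈ weylW r, ∃ i : Fin (r + 1), α = w (Pi.single i 1)}

section WordLength

variable {G ι : Type*} [Group G] (s : ι → G)

def wordProd (L : List ι) : G := (L.map s).prod

noncomputable def wordLength (g : G) : ℕ :=
  sInf {n | ∃ L, wordProd s L = g ∧ L.length = n}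

variable {s}

@[simp] lemma wordProd_nil : wordProd s [] = 1 := rfl

@[simp] lemma wordProd_append (L M : List ι) :
    wordProd s (L ++ M) = wordProd s L * wordProd s M := by
  simp [wordProd]

@[simp] lemma wordProd_singleton (i : ι) : wordProd s [i] = s i := by
  simp [wordProd]

@[simp] lemma wordProd_cons (i : ι) (L : List ι) : wordProd s (i :: L) = s i * wordProd s L := by
  simp [wordProd]

lemma wordProd_reverse (hs : ∀ i, s i * s i = 1) (L : List ι) :
    wordProd s L.reverse = (wordProd s L)⁻¹ := by
  induction L with
  | nil => simp
  | cons i L ih => simp [ih, inv_eq_of_mul_eq_one_right (hs i)]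

lemma mem_range_wordProd_of_mem_closure (hs : ∀ i, s i * s i = 1) {g : G}
    (hg : g ∈ Subgroup.closure (Set.range s)) : g ∈ Set.range (wordProd s) := by
  induction hg using Subgroup.closure_induction with
  | mem _ h =>
    obtain ⟨i, rfl⟩ := h
    exact ⟨[i], wordProd_singleton i⟩
  | one => exact ⟨[], rfl⟩
  | mul _ _ _ _ hg hh =>
    obtain ⟨L, rfl⟩ := hg
    obtain ⟨M, rfl⟩ := hh
    exact ⟨L ++ M, wordProd_append L M⟩
  | inv _ _ hg =>
    obtain ⟨L, rfl⟩ := hg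
    exact ⟨L.reverse, wordProd_reverse hs L⟩

lemma mul_mem_range_wordProd {g : G} (hg : g ∈ Set.range (wordProd s)) (i : ι) :
    g * s i ∈ Set.range (wordProd s) := by
  obtain ⟨L, rfl⟩ := hg
  exact ⟨L ++ [i], by simp⟩

lemma wordLength_wordProd_le (L : List ι) : wordLength s (wordProd s L) ≤ L.length :=
  Nat.sInf_le ⟨L, rfl, rfl⟩

lemma exists_reduced_word {g : G} (hg : g ∈ Set.range (wordProd s)) :
    ∃ L, wordProd s L = g ∧ L.length = wordLength s g := by
  obtain ⟨L, hL⟩ := hg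
  exact Nat.sInf_mem (s := {n | ∃ L, wordProd s L = g ∧ L.length = n}) ⟨L.length, L, hL, rfl⟩

lemma wordLength_mul_le {g h : G} (hg : g ∈ Set.range (wordProd s))
    (hh : h ∈ Set.range (wordProd s)) : wordLength s (g * h) ≤ wordLength s g + wordLength s h := by
  obtain ⟨L, rfl, hL⟩ := exists_reduced_word hg
  obtain ⟨M, rfl, hM⟩ := exists_reduced_word hh
  simpa [← hL, ← hM] using wordLength_wordProd_le (s := s) (L ++ M)

lemma wordLength_mul_wordProd_le {g : G} (hg : g ∈ Set.range (wordProd s)) (L : List ι) :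
    wordLength s (g * wordProd s L) ≤ wordLength s g + L.length :=
  (wordLength_mul_le hg (Set.mem_range_self L)).trans
    (Nat.add_le_add_left (wordLength_wordProd_le L) _)

lemma eq_one_of_wordLength_eq_zero {g : G} (hg : g ∈ Set.range (wordProd s))
    (h : wordLength s g = 0) : g = 1 := by
  obtain ⟨L, rfl, hL⟩ := exists_reduced_word hg
  simp [List.length_eq_zero_iff.mp (hL.trans h)]

lemma exists_wordLength_mul_lt (hs : ∀ i, s i * s i = 1) {g : G}
    (hg : g ∈ Set.range (wordProd s)) (h : wordLength s g ≠ 0) :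
    ∃ b, wordLength s (g * s b) < wordLength s g := by
  obtain ⟨L, rfl, hL⟩ := exists_reduced_word hg
  obtain ⟨M, b, rfl⟩ := (List.eq_nil_or_concat' L).resolve_left (by rintro rfl; simp_all)
  refine ⟨b, ?_⟩
  have : wordProd s (M ++ [b]) * s b = wordProd s M := by simp [mul_assoc, hs]
  rw [this, ← hL]
  exact (wordLength_wordProd_le M).trans_lt (by simp)

end WordLength

section Parabolic

variable {G ι : Type*} [Group G]

structure IsParabolicFactorization (s : ι → G) (a b : ι) (g v : G) (L : List ι) : Prop where
  mem_range : v ∈ Set.range (wordProd s)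
  mem_pair : ∀ x ∈ L, x = a ∨ x = b
  mul_eq : v * wordProd s L = g
  wordLength_add : wordLength s v + L.length = wordLength s g

variable {s : ι → G} {a b : ι} {g v : G} {L : List ι}

lemma IsParabolicFactorization.wordLength_wordProd
    (h : IsParabolicFactorization s a b g v L) : wordLength s (wordProd s L) = L.length := by
  have := h.mul_eq ▸ wordLength_mul_le h.mem_range (Set.mem_range_self L)
  have := wordLength_wordProd_le (s := s) L
  have := h.wordLength_add
  omega

lemma IsParabolicFactorization.wordLength_le_mul (h : IsParabolicFactorization s a b g v L)
    {c : ι} (hc : wordLength s g ≤ wordLength s (g * s c)) :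
    wordLength s (wordProd s L) ≤ wordLength s (wordProd s L * s c) := by
  have := wordLength_mul_le h.mem_range (mul_mem_range_wordProd (Set.mem_range_self L) c)
  rw [← mul_assoc, h.mul_eq] at this
  have := h.wordLength_add
  have := h.wordLength_wordProd
  omega

lemma exists_minimal_parabolicFactorization (hs : ∀ i, s i * s i = 1)
    (hg : g ∈ Set.range (wordProd s)) (hb : wordLength s (g * s b) < wordLength s g) (a : ι) :
    ∃ v L, IsParabolicFactorization s a b g v L ∧ wordLength s v < wordLength s g ∧
      ∀ c, c = a ∨ c = b → wordLength s v ≤ wordLength s (v * s c) := by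
  classical
  have hgb := wordLength_mul_wordProd_le (mul_mem_range_wordProd hg b) [b]
  simp only [wordProd_singleton, mul_assoc, hs, mul_one, List.length_singleton] at hgb
  have hstart : IsParabolicFactorization s a b g (g * s b) [b] :=
    ⟨mul_mem_range_wordProd hg b, by simp, by simp [mul_assoc, hs], by simp; omega⟩
  have hex : ∃ n, ∃ v L, IsParabolicFactorization s a b g v L ∧ wordLength s v = n :=
    ⟨_, _, _, hstart, rfl⟩
  obtain ⟨v, L, hf, hv⟩ := Nat.find_spec hex
  have hmin : ∀ v' L', IsParabolicFactorization s a b g v' L' →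
      Nat.find hex ≤ wordLength s v' := fun v' L' h => Nat.find_min' hex ⟨v', L', h, rfl⟩
  refine ⟨v, L, hf, by have := hmin _ _ hstart; omega, fun c hc => ?_⟩
  by_contra! hlt
  have hvc : v * s c * wordProd s (c :: L) = g := by
    simp [mul_assoc, ← hf.mul_eq, ← mul_assoc (s c), hs]
  have hvc_mem := mul_mem_range_wordProd hf.mem_range c
  have hle := hvc ▸ wordLength_mul_wordProd_le hvc_mem (c :: L)
  have := hf.wordLength_add
  have := hmin _ (c :: L)
    ⟨hvc_mem, by simpa [hc] using hf.mem_pair, hvc, by simp only [List.length_cons] at *; omega⟩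
  omega

end Parabolic

section RankTwo

variable {G ι V : Type*} [Group G] [AddCommGroup V] [DistribMulAction G V]

variable (s : ι → G) (α : ι → V) in
def IsOrthogonalPair (a b : ι) : Prop :=
  s a * s b = s b * s a ∧ s b • α a = α a

variable (s : ι → G) (α : ι → V) in
def IsAdjacentPair (a b : ι) : Prop :=
  s a * s b * s a = s b * s a * s b ∧ s b • α a = α a + α b ∧ s a • α b = α b + α a

variable {s : ι → G} {α : ι → V} {a b : ι}

theorem exists_smul_eq_nsmul_add_nsmul (hs : ∀ i, s i * s i = 1) (ha : s a • α a = -α a)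
    (hab : IsOrthogonalPair s α a b ∨ IsAdjacentPair s α a b) {L : List ι}
    (hL : ∀ x ∈ L, x = a ∨ x = b) (hred : wordLength s (wordProd s L) = L.length)
    (hdesc : wordLength s (wordProd s L) ≤ wordLength s (wordProd s L * s a)) :
    ∃ p q : ℕ, wordProd s L • α a = p • α a + q • α b := by
  have hshort : ∀ L', wordProd s L' = wordProd s L * s a → L.length ≤ L'.length :=
    fun L' h => hred ▸ hdesc.trans (h ▸ wordLength_wordProd_le L')
  have hreduced : ∀ L', wordProd s L' = wordProd s L → L.length ≤ L'.length :=
    fun L' h => hred ▸ h ▸ wordLength_wordProd_le L'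
  -- Read `L` from the right: `[]`, `[b]` and (adjacent case) `[a, b]` are the positive cases; any
  -- other word repeats a letter, or ends in `a` after a commutation or braid move.
  obtain ⟨M, rfl⟩ : ∃ M, L = M.reverse := ⟨L.reverse, L.reverse_reverse.symm⟩
  simp only [List.mem_reverse] at hL
  rcases M with _ | ⟨x, M⟩
  · exact ⟨1, 0, by simp⟩
  rcases hL x (by simp) with hx | hx <;> subst x
  · have := hshort M.reverse (by simp [mul_assoc, hs])
    simp at this
  rcases M with _ | ⟨y, M⟩
  · rcases hab with ⟨-, h⟩ | ⟨-, h, -⟩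
    · exact ⟨1, 0, by simp [h]⟩
    · exact ⟨1, 1, by simp [h]⟩
  rcases hL y (by simp) with hy | hy <;> subst y
  swap
  · have := hreduced M.reverse (by simp [hs])
    simp at this
  rcases hab with ⟨hcomm, -⟩ | ⟨hbraid, hb_a, ha_b⟩
  · have := hshort (M.reverse ++ [b])
      (by simp [mul_assoc, ← hcomm, ← mul_assoc (s a), hs])
    simp at this
  rcases M with _ | ⟨z, M⟩
  · exact ⟨0, 1, by simp [mul_smul, hb_a, ha, smul_add, ha_b]⟩
  rcases hL z (by simp) with hz | hz <;> subst z
  · have := hreduced (M.reverse ++ [b]) (by simp [← mul_assoc, hs])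
    simp at this
  · have hbraid' : s b * (s a * (s b * s a)) = s a * s b := by
      rw [← mul_assoc, ← mul_assoc, ← hbraid, mul_assoc, hs, mul_one]
    have := hshort (M.reverse ++ [a, b]) (by simp [mul_assoc, hbraid'])
    simp at this

end RankTwo

section Positivity

variable {G ι V : Type*} [Group G] [AddCommGroup V] [PartialOrder V] [IsOrderedAddMonoid V]
  [DistribMulAction G V] {s : ι → G} {α : ι → V}

theorem smul_nonneg_of_wordLength_le_mul (hs : ∀ i, s i * s i = 1)
    (hα : ∀ i, s i • α i = -α i) (hα₀ : ∀ i, 0 ≤ α i)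
    (hpair : ∀ a b, a ≠ b → IsOrthogonalPair s α a b ∨ IsAdjacentPair s α a b)
    {g : G} (hg : g ∈ Set.range (wordProd s)) {a : ι}
    (ha : wordLength s g ≤ wordLength s (g * s a)) : 0 ≤ g • α a := by
  induction hn : wordLength s g using Nat.strong_induction_on generalizing g a with
  | _ n ih =>
  subst hn
  by_cases h0 : wordLength s g = 0
  · simpa [eq_one_of_wordLength_eq_zero hg h0] using hα₀ a
  obtain ⟨b, hb⟩ := exists_wordLength_mul_lt hs hg h0
  have hab : a ≠ b := by rintro rfl; omega
  obtain ⟨v, L, hf, hvg, hvmin⟩ := exists_minimal_parabolicFactorization hs hg hb a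
  have hva : 0 ≤ v • α a := ih _ hvg hf.mem_range (hvmin a (.inl rfl)) rfl
  have hvb : 0 ≤ v • α b := ih _ hvg hf.mem_range (hvmin b (.inr rfl)) rfl
  obtain ⟨p, q, hpq⟩ := exists_smul_eq_nsmul_add_nsmul hs (hα a) (hpair a b hab) hf.mem_pair
    hf.wordLength_wordProd (hf.wordLength_le_mul ha)
  rw [← hf.mul_eq, mul_smul, hpq, smul_add, smul_comm v p, smul_comm v q]
  exact add_nonneg (nsmul_nonneg hva p) (nsmul_nonneg hvb q)

theorem smul_nonneg_or_nonpos (hs : ∀ i, s i * s i = 1)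
    (hα : ∀ i, s i • α i = -α i) (hα₀ : ∀ i, 0 ≤ α i)
    (hpair : ∀ a b, a ≠ b → IsOrthogonalPair s α a b ∨ IsAdjacentPair s α a b)
    {g : G} (hg : g ∈ Subgroup.closure (Set.range s)) (a : ι) :
    0 ≤ g • α a ∨ g • α a ≤ 0 := by
  have hg' := mem_range_wordProd_of_mem_closure hs hg
  rcases le_or_gt (wordLength s g) (wordLength s (g * s a)) with h | h
  · exact .inl (smul_nonneg_of_wordLength_le_mul hs hα hα₀ hpair hg' h)
  · have := smul_nonneg_of_wordLength_le_mul hs hα hα₀ hpair (mul_mem_range_wordProd hg' a)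
      (a := a) (by simpa [mul_assoc, hs] using h.le)
    rw [mul_smul, hα, smul_neg, neg_nonneg] at this
    exact .inr this

end Positivity

section Star

variable {r : ℕ}

/-- `w_i` as a linear automorphism: unlike `Equiv.Perm`, the group of these acts distributively
on `ℤ^{r+1}`. -/
def simpleReflection (r : ℕ) (i : Fin (r + 1)) : (Fin (r + 1) → ℤ) ≃ₗ[ℤ] (Fin (r + 1) → ℤ) :=
  LinearEquiv.ofInvolutive
    { toFun := wFun r i
      map_add' x y := by
        funext j
        simp only [wFun, Pi.add_apply, sum_add_distrib]
        split_ifs <;> ring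
      map_smul' c x := by
        funext j
        simp only [wFun, Pi.smul_apply, smul_eq_mul, RingHom.id_apply, ← mul_sum]
        split_ifs <;> ring }
    (wFun_involutive r i)

lemma simpleReflection_apply (i : Fin (r + 1)) (x : Fin (r + 1) → ℤ) :
    simpleReflection r i x = wFun r i x := rfl

lemma simpleReflection_apply_self_of_ne_last {i : Fin (r + 1)} (hi : i ≠ Fin.last r)
    (x : Fin (r + 1) → ℤ) : simpleReflection r i x i = x (Fin.last r) - x i := by
  simp [simpleReflection_apply, wFun, hi]

lemma simpleReflection_apply_last_of_ne_last {i : Fin (r + 1)} (hi : i ≠ Fin.last r)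
    (x : Fin (r + 1) → ℤ) : simpleReflection r i x (Fin.last r) = x (Fin.last r) :=
  wFun_apply_ne r i x (Ne.symm hi)

lemma simpleReflection_single_self (i : Fin (r + 1)) :
    simpleReflection r i (Pi.single i 1) = -Pi.single i 1 := by
  funext j
  by_cases hj : j = i
  · subst hj
    by_cases hl : j = Fin.last r
    · subst hl
      simp [simpleReflection_apply, wFun, (Fin.castSucc_lt_last _).ne]
    · simp [simpleReflection_apply, wFun, hl, Ne.symm hl]
  · simp [simpleReflection_apply, wFun, hj]

lemma simpleReflection_single_of_ne_last {i j : Fin (r + 1)} (hij : i ≠ j)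
    (hi : i ≠ Fin.last r) (hj : j ≠ Fin.last r) :
    simpleReflection r i (Pi.single j 1) = Pi.single j 1 := by
  funext k
  by_cases hk : k = i
  · subst hk
    simp [simpleReflection_apply, wFun, hi, hij, Ne.symm hj]
  · simp [simpleReflection_apply, wFun, hk]

lemma simpleReflection_single_of_adj {i j : Fin (r + 1)} (hij : i ≠ j)
    (h : i = Fin.last r ∨ j = Fin.last r) :
    simpleReflection r i (Pi.single j 1) = Pi.single j 1 + Pi.single i 1 := by
  funext k
  by_cases hk : k = i
  · subst hk
    rcases h with rfl | rfl
    · obtain ⟨j, rfl⟩ := Fin.exists_castSucc_eq.mpr (Ne.symm hij)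
      simp [simpleReflection_apply, wFun, Pi.single_apply, hij]
    · simp [simpleReflection_apply, wFun, hij]
  · simp [simpleReflection_apply, wFun, hk]

lemma simpleReflection_mul_self (i : Fin (r + 1)) :
    simpleReflection r i * simpleReflection r i = 1 :=
  LinearEquiv.ext (wFun_involutive r i)

lemma simpleReflection_commute {a b : Fin (r + 1)} (hab : a ≠ b) (ha : a ≠ Fin.last r)
    (hb : b ≠ Fin.last r) :
    simpleReflection r a * simpleReflection r b = simpleReflection r b * simpleReflection r a := by
  refine (Pi.basisFun ℤ (Fin (r + 1))).ext' fun j => ?_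
  simp only [Pi.basisFun_apply, LinearEquiv.mul_apply]
  rcases eq_or_ne j (Fin.last r) with rfl | hj
  · simp [simpleReflection_single_of_adj, simpleReflection_single_of_ne_last, hab, Ne.symm hab,
      ha, hb]
    abel
  rcases eq_or_ne j a with rfl | hja
  · simp [simpleReflection_single_self, simpleReflection_single_of_ne_last, Ne.symm hab, hj, hb]
  rcases eq_or_ne j b with rfl | hjb
  · simp [simpleReflection_single_self, simpleReflection_single_of_ne_last, hab, hj, ha]
  simp [simpleReflection_single_of_ne_last, Ne.symm hja, Ne.symm hjb, hj, ha, hb]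

lemma simpleReflection_braid {a : Fin (r + 1)} (ha : a ≠ Fin.last r) :
    simpleReflection r a * simpleReflection r (Fin.last r) * simpleReflection r a =
      simpleReflection r (Fin.last r) * simpleReflection r a * simpleReflection r (Fin.last r) := by
  refine (Pi.basisFun ℤ (Fin (r + 1))).ext' fun j => ?_
  simp only [Pi.basisFun_apply, LinearEquiv.mul_apply]
  rcases eq_or_ne j (Fin.last r) with rfl | hj
  · simp [simpleReflection_single_of_adj, simpleReflection_single_self, ha, Ne.symm ha]
  rcases eq_or_ne j a with rfl | hja
  · simp [simpleReflection_single_of_adj, simpleReflection_single_self, ha, Ne.symm ha]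
  simp [simpleReflection_single_of_adj, simpleReflection_single_self,
    simpleReflection_single_of_ne_last, ha, Ne.symm ha, hj, Ne.symm hj, Ne.symm hja]
  abel

lemma isOrthogonalPair_or_isAdjacentPair_simpleReflection {a b : Fin (r + 1)} (hab : a ≠ b) :
    IsOrthogonalPair (simpleReflection r) (fun i => Pi.single i (1 : ℤ)) a b ∨
      IsAdjacentPair (simpleReflection r) (fun i => Pi.single i (1 : ℤ)) a b := by
  by_cases ha : a = Fin.last r
  · subst ha
    exact .inr ⟨(simpleReflection_braid (Ne.symm hab)).symm,
      simpleReflection_single_of_adj (Ne.symm hab) (.inr rfl),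
      simpleReflection_single_of_adj hab (.inl rfl)⟩
  by_cases hb : b = Fin.last r
  · subst hb
    exact .inr ⟨simpleReflection_braid ha, simpleReflection_single_of_adj (Ne.symm hab) (.inl rfl),
      simpleReflection_single_of_adj hab (.inr rfl)⟩
  exact .inl ⟨simpleReflection_commute hab ha hb,
    simpleReflection_single_of_ne_last (Ne.symm hab) hb ha⟩

lemma weylW_eq_map_closure : weylW r =
    (Subgroup.closure (Set.range (simpleReflection r))).map (MulAction.toPermHom _ _) := by
  rw [MonoidHom.map_closure, ← Set.range_comp]
  rfl

lemma exists_mem_closure_of_mem_realRoots {α : Fin (r + 1) → ℤ} (h : α ∈ realRoots r) :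
    ∃ g ∈ Subgroup.closure (Set.range (simpleReflection r)), ∃ j, α = g (Pi.single j 1) := by
  obtain ⟨w, hw, j, rfl⟩ := h
  obtain ⟨g, hg, rfl⟩ := weylW_eq_map_closure ▸ hw
  exact ⟨g, hg, j, rfl⟩

end Star

theorem coeff_le_last_of_posRealRoot_general (r : ℕ) (α : Fin (r + 1) → ℤ)
    (hroot : α ∈ realRoots r) (hlast : 1 ≤ α (Fin.last r)) :
    ∀ i : Fin r, α i.castSucc ≤ α (Fin.last r) := by
  intro i
  obtain ⟨g, hg, j, rfl⟩ := exists_mem_closure_of_mem_realRoots hroot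
  have hi : i.castSucc ≠ Fin.last r := (Fin.castSucc_lt_last i).ne
  have hβ := smul_nonneg_or_nonpos simpleReflection_mul_self simpleReflection_single_self
    (fun _ => Pi.single_nonneg.2 zero_le_one)
    (fun _ _ => isOrthogonalPair_or_isAdjacentPair_simpleReflection)
    (Subgroup.mul_mem _ (Subgroup.subset_closure (Set.mem_range_self i.castSucc)) hg) j
  rw [mul_smul, LinearEquiv.smul_def, LinearEquiv.smul_def] at hβ
  rcases hβ with hpos | hneg
  · have := hpos i.castSucc
    rw [Pi.zero_apply, simpleReflection_apply_self_of_ne_last hi] at this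
    linarith
  · have := hneg (Fin.last r)
    rw [Pi.zero_apply, simpleReflection_apply_last_of_ne_last hi] at this
    linarith

/-- If `α` is a positive real root with `k_{r+1} ≥ 1`, then `k_i ≤ k_{r+1}` for all
`i = 1, …, r`. -/
theorem coeff_le_last_of_posRealRoot (r : ℕ) (hr : 1 ≤ r) (α : Fin (r + 1) → ℤ)
    (hroot : α ∈ realRoots r) (hpos : ∀ j, 0 ≤ α j) (hlast : 1 ≤ α (Fin.last r)) :
    ∀ i : Fin r, α i.castSucc ≤ α (Fin.last r) :=
  coeff_le_last_of_posRealRoot_general r α hroot hlast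
end

section
/- A vector α ∈ ℤ^{r+1} is a positive real root whose last coordinate k_{r+1} equals 1 if and only if α = e_{r+1} + Σ_{i∈S} e_i for some subset S ⊆ {1,…,r}. (Thus the set Φ₁ of positive real roots with k_{r+1} = 1 is exactly {Σ_{i∈S} e_i + e_{r+1} : S ⊆ {1,…,r}}.) -/
open Finset

/-!
A real root `α` satisfies `(α | α) = 2` for the invariant form of the symmetric matrix `A`,
since `W` preserves the form and `(αᵢ | αᵢ) = 2`. Writing `α = (k₁, …, k_r, 1)`, this reads
`∑ kᵢ (kᵢ - 1) = 0`, which forces every coordinate of a positive such root into `{0, 1}`.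
Conversely, `e_{r+1} + ∑_{i ∈ S} e_i` is obtained from `e_{r+1}` by applying `wᵢ` for `i ∈ S`
one at a time, each of which raises the `i`-th coordinate from `0` to `k_{r+1} - 0 = 1`.
-/

lemma Fintype.sum_comp_update {ι α M : Type*} [Fintype ι] [DecidableEq ι] [AddCommGroup M]
    (g : α → M) (x : ι → α) (m : ι) (b : α) :
    ∑ l, g (Function.update x m b l) = ∑ l, g (x l) - g (x m) + g b := by
  have h := Finset.sum_update_of_mem (Finset.mem_univ m) (g ∘ x) (g b)
  rw [← Function.comp_update, Function.comp_def] at h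
  rw [h, Finset.sum_eq_add_sum_sdiff_singleton_of_mem (Finset.mem_univ m) (fun l => g (x l))]
  simp only [Function.comp_def]
  abel

lemma Int.eq_zero_or_eq_one_of_sum_mul_sub_one_eq_zero {ι : Type*} {s : Finset ι} {f : ι → ℤ}
    (hf : ∀ i ∈ s, 0 ≤ f i) (hsum : ∑ i ∈ s, f i * (f i - 1) = 0) :
    ∀ i ∈ s, f i = 0 ∨ f i = 1 := by
  have hterm : ∀ i ∈ s, 0 ≤ f i * (f i - 1) := fun i hi => by
    rcases (hf i hi).eq_or_lt with h | h
    · simp [← h]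
    · exact mul_nonneg (hf i hi) (by omega)
  intro i hi
  rcases mul_eq_zero.mp ((Finset.sum_eq_zero_iff_of_nonneg hterm).mp hsum i hi) with h | h
  · exact Or.inl h
  · exact Or.inr (by omega)

section RealRoots

variable {r : ℕ}

@[simp]
lemma wFun_last_apply_last (k : Fin (r + 1) → ℤ) :
    wFun r (Fin.last r) k (Fin.last r) = (∑ l : Fin r, k l.castSucc) - k (Fin.last r) := by
  simp [wFun]

@[simp]
lemma wFun_last_apply_castSucc (k : Fin (r + 1) → ℤ) (l : Fin r) :
    wFun r (Fin.last r) k l.castSucc = k l.castSucc :=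
  wFun_apply_ne _ _ _ (Fin.castSucc_lt_last l).ne

@[simp]
lemma wFun_castSucc_apply_last (m : Fin r) (k : Fin (r + 1) → ℤ) :
    wFun r m.castSucc k (Fin.last r) = k (Fin.last r) :=
  wFun_apply_ne _ _ _ (Fin.castSucc_lt_last m).ne'

lemma wFun_castSucc_comp_castSucc (m : Fin r) (k : Fin (r + 1) → ℤ) :
    (fun l : Fin r => wFun r m.castSucc k l.castSucc)
      = Function.update (fun l => k l.castSucc) m (k (Fin.last r) - k m.castSucc) := by
  funext l
  by_cases hl : l = m
  · subst hl
    simp [wFun, (Fin.castSucc_lt_last l).ne]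
  · simp [wFun, hl]

/-- Half the invariant form `(k | k)` of the symmetric generalized Cartan matrix `A`. -/
def rootForm (r : ℕ) (k : Fin (r + 1) → ℤ) : ℤ :=
  (∑ l : Fin r, k l.castSucc ^ 2) + k (Fin.last r) ^ 2
    - k (Fin.last r) * ∑ l : Fin r, k l.castSucc

lemma rootForm_wFun (i : Fin (r + 1)) (k : Fin (r + 1) → ℤ) :
    rootForm r (wFun r i k) = rootForm r k := by
  induction i using Fin.lastCases with
  | last =>
    simp only [rootForm, wFun_last_apply_castSucc, wFun_last_apply_last]
    ring
  | cast m =>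
    classical
    have hcoord := wFun_castSucc_comp_castSucc m k
    have hsq := Fintype.sum_comp_update (· ^ 2) (fun l => k l.castSucc) m
      (k (Fin.last r) - k m.castSucc)
    have hlin := Fintype.sum_comp_update id (fun l => k l.castSucc) m
      (k (Fin.last r) - k m.castSucc)
    rw [← hcoord] at hsq hlin
    simp only [id] at hsq hlin
    simp only [rootForm, wFun_castSucc_apply_last, hsq, hlin]
    ring

lemma rootForm_weyl {w : Equiv.Perm (Fin (r + 1) → ℤ)} (hw : w ∈ weylW r)
    (k : Fin (r + 1) → ℤ) : rootForm r (w k) = rootForm r k := by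
  induction hw using Subgroup.closure_induction generalizing k with
  | mem x hx =>
    obtain ⟨i, rfl⟩ := hx
    exact rootForm_wFun i k
  | one => rfl
  | mul x y _ _ hx hy => exact (hx (y k)).trans (hy k)
  | inv x _ hx => simpa using (hx (x⁻¹ k)).symm

lemma rootForm_single (i : Fin (r + 1)) : rootForm r (Pi.single i 1) = 1 := by
  induction i using Fin.lastCases with
  | last => simp [rootForm, (Fin.castSucc_lt_last _).ne]
  | cast m => simp [rootForm, Pi.single_apply, (Fin.castSucc_lt_last _).ne']

lemma rootForm_of_mem_realRoots {α : Fin (r + 1) → ℤ} (hα : α ∈ realRoots r) :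
    rootForm r α = 1 := by
  obtain ⟨w, hw, i, rfl⟩ := hα
  rw [rootForm_weyl hw, rootForm_single]

lemma rootForm_of_last_eq_one {k : Fin (r + 1) → ℤ} (hk : k (Fin.last r) = 1) :
    rootForm r k = 1 + ∑ l : Fin r, k l.castSucc * (k l.castSucc - 1) := by
  simp only [rootForm, hk, mul_sub, mul_one, Finset.sum_sub_distrib, sq]
  ring

lemma wFun_mem_realRoots {α : Fin (r + 1) → ℤ} (i : Fin (r + 1)) (hα : α ∈ realRoots r) :
    wFun r i α ∈ realRoots r := by
  obtain ⟨w, hw, j, rfl⟩ := hα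
  exact ⟨wRefl r i * w, mul_mem (Subgroup.subset_closure ⟨i, rfl⟩) hw, j, rfl⟩

def rootOfFinset (r : ℕ) (S : Finset (Fin r)) : Fin (r + 1) → ℤ :=
  Pi.single (Fin.last r) 1 + ∑ i ∈ S, Pi.single i.castSucc 1

@[simp]
lemma rootOfFinset_apply_last (S : Finset (Fin r)) : rootOfFinset r S (Fin.last r) = 1 := by
  simp [rootOfFinset, Finset.sum_apply, (Fin.castSucc_lt_last _).ne']

@[simp]
lemma rootOfFinset_apply_castSucc (S : Finset (Fin r)) (m : Fin r) :
    rootOfFinset r S m.castSucc = if m ∈ S then 1 else 0 := by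
  simp [rootOfFinset, Finset.sum_apply, Pi.single_apply, (Fin.castSucc_lt_last _).ne]

lemma rootOfFinset_nonneg (S : Finset (Fin r)) (j : Fin (r + 1)) : 0 ≤ rootOfFinset r S j := by
  induction j using Fin.lastCases with
  | last => simp
  | cast m => simp only [rootOfFinset_apply_castSucc]; split <;> norm_num

lemma wFun_castSucc_rootOfFinset {S : Finset (Fin r)} {a : Fin r}
    (ha : a ∉ S) : wFun r a.castSucc (rootOfFinset r S) = rootOfFinset r (insert a S) := by
  funext j
  induction j using Fin.lastCases with
  | last => simp
  | cast m =>
    rw [congrFun (wFun_castSucc_comp_castSucc a _) m]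
    by_cases hm : m = a
    · subst hm
      simp [ha]
    · simp [hm]

lemma rootOfFinset_mem_realRoots (S : Finset (Fin r)) : rootOfFinset r S ∈ realRoots r := by
  induction S using Finset.induction_on with
  | empty => exact ⟨1, one_mem _, Fin.last r, by simp [rootOfFinset]⟩
  | insert a S ha ih =>
    rw [← wFun_castSucc_rootOfFinset ha]
    exact wFun_mem_realRoots _ ih

lemma eq_rootOfFinset_of_coord_mem {k : Fin (r + 1) → ℤ} (hlast : k (Fin.last r) = 1)
    (hcoord : ∀ l : Fin r, k l.castSucc = 0 ∨ k l.castSucc = 1) :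
    k = rootOfFinset r {l | k l.castSucc = 1} := by
  funext j
  induction j using Fin.lastCases with
  | last => simp [hlast]
  | cast m => rcases hcoord m with h | h <;> simp [h]

end RealRoots

theorem posRealRoot_last_coord_one_iff_general (r : ℕ) (α : Fin (r + 1) → ℤ) :
    (α ∈ realRoots r ∧ (∀ j, 0 ≤ α j) ∧ α (Fin.last r) = 1) ↔
      ∃ S : Finset (Fin r),
        α = Pi.single (Fin.last r) 1 + ∑ i ∈ S, Pi.single i.castSucc (1 : ℤ) := by
  constructor
  · rintro ⟨hroot, hnonneg, hlast⟩
    have hsum : ∑ l : Fin r, α l.castSucc * (α l.castSucc - 1) = 0 := by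
      have h := rootForm_of_mem_realRoots hroot
      rw [rootForm_of_last_eq_one hlast] at h
      omega
    have hcoord := Int.eq_zero_or_eq_one_of_sum_mul_sub_one_eq_zero
      (fun l _ => hnonneg l.castSucc) hsum
    exact ⟨_, eq_rootOfFinset_of_coord_mem hlast fun l => hcoord l (Finset.mem_univ l)⟩
  · rintro ⟨S, rfl⟩
    exact ⟨rootOfFinset_mem_realRoots S, rootOfFinset_nonneg S, rootOfFinset_apply_last S⟩

/-- `α ∈ ℤ^{r+1}` is a positive real root with last coordinate `1` if and only if
`α = e_{r+1} + ∑_{i ∈ S} e_i` for some subset `S ⊆ {1, …, r}`. -/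
theorem posRealRoot_last_coord_one_iff (r : ℕ) (hr : 1 ≤ r) (α : Fin (r + 1) → ℤ) :
    (α ∈ realRoots r ∧ (∀ j, 0 ≤ α j) ∧ α (Fin.last r) = 1) ↔
      ∃ S : Finset (Fin r),
        α = Pi.single (Fin.last r) 1 + ∑ i ∈ S, Pi.single i.castSucc (1 : ℤ) :=
  posRealRoot_last_coord_one_iff_general r α
end

section
/- For all a, b ∈ K such that each of a, b, and s·a·b lies outside {0, 1, −1}, the braid identity M(a)·U·M(s·a·b)·U·M(b) = U·M(b)·U·M(s·a·b)·U·M(a)·U holds. (This is the matrix identity corresponding to the Weyl group relation w_i w_{r+1} w_i = w_{r+1} w_i w_{r+1}; together with U² = I and M(u)·M(1/(qu)) = I it shows that the 1-cocycle M_w(z; q), defined on generators by M_{w_i}(z) = M(z_i) for i ≤ r and M_{w_{r+1}}(z) = U·M(z_{r+1})·U and extended by the cocycle relation M_{ww'}(z) = M_{w'}(z)·M_w(w'z), is well-defined.) -/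
set_option maxHeartbeats 2000000

/-- With `q = s²`, `M(u) = diag(-(1-qu)/(qu(1-u)), 1/(su), (1+qu)/(qu(1+u)))` and `U` the
matrix with rows `(1/2, 1, 1/2)`, `(1/2, 0, -1/2)`, `(1/2, -1, 1/2)`, the braid identity
`M(a) U M(sab) U M(b) = U M(b) U M(sab) U M(a) U` holds whenever each of `a`, `b`, `s·a·b`
lies outside `{0, 1, -1}`. -/
theorem braid_identity_cocycle {K : Type*} [Field K] (hchar : (2 : K) ≠ 0)
    (s q : K) (hs : s ≠ 0) (hq : q = s ^ 2)
    (M : K → Matrix (Fin 3) (Fin 3) K)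
    (hM : ∀ u : K, M u = Matrix.diagonal
      ![-(1 - q * u) / (q * u * (1 - u)), 1 / (s * u), (1 + q * u) / (q * u * (1 + u))])
    (U : Matrix (Fin 3) (Fin 3) K)
    (hU : U = !![1/2, 1, 1/2; 1/2, 0, -1/2; 1/2, -1, 1/2])
    (a b : K)
    (ha0 : a ≠ 0) (ha1 : a ≠ 1) (ha1' : a ≠ -1)
    (hb0 : b ≠ 0) (hb1 : b ≠ 1) (hb1' : b ≠ -1)
    (hab0 : s * a * b ≠ 0) (hab1 : s * a * b ≠ 1) (hab1' : s * a * b ≠ -1) :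
    M a * U * M (s * a * b) * U * M b = U * M b * U * M (s * a * b) * U * M a * U := by
  subst hq
  have hq0 : (s : K) ^ 2 ≠ 0 := pow_ne_zero 2 hs
  set c : K → K := fun u => (s ^ 2 * u * (1 - u) * (1 + u))⁻¹ with hc
  set D : K → Matrix (Fin 3) (Fin 3) K := fun u =>
    Matrix.diagonal ![-(1 - s ^ 2 * u) * (1 + u), s * (1 - u) * (1 + u), (1 + s ^ 2 * u) * (1 - u)]
    with hD
  set V : Matrix (Fin 3) (Fin 3) K := !![1, 2, 1; 1, 0, -1; 1, -2, 1] with hV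
  -- factor M u = c u • D u
  have key : ∀ u : K, u ≠ 0 → u ≠ 1 → u ≠ -1 → M u = c u • D u := by
    intro u h0 h1 h1'
    have hu1 : (1 : K) - u ≠ 0 := sub_ne_zero.mpr (fun h => h1 h.symm)
    have hu1' : (1 : K) + u ≠ 0 := fun h => h1' (by linear_combination h)
    have he : s ^ 2 * u * (1 - u) * (1 + u) ≠ 0 :=
      mul_ne_zero (mul_ne_zero (mul_ne_zero hq0 h0) hu1) hu1'
    have entries : (![-(1 - s ^ 2 * u) / (s ^ 2 * u * (1 - u)), 1 / (s * u),
        (1 + s ^ 2 * u) / (s ^ 2 * u * (1 + u))] : Fin 3 → K)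
        = c u • ![-(1 - s ^ 2 * u) * (1 + u), s * (1 - u) * (1 + u), (1 + s ^ 2 * u) * (1 - u)] := by
      funext i
      fin_cases i
      · show -(1 - s ^ 2 * u) / (s ^ 2 * u * (1 - u))
            = (s ^ 2 * u * (1 - u) * (1 + u))⁻¹ * (-(1 - s ^ 2 * u) * (1 + u))
        rw [inv_mul_eq_div, div_eq_div_iff (mul_ne_zero (mul_ne_zero hq0 h0) hu1) he]; ring
      · show 1 / (s * u) = (s ^ 2 * u * (1 - u) * (1 + u))⁻¹ * (s * (1 - u) * (1 + u))
        rw [inv_mul_eq_div, div_eq_div_iff (mul_ne_zero hs h0) he]; ring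
      · show (1 + s ^ 2 * u) / (s ^ 2 * u * (1 + u))
            = (s ^ 2 * u * (1 - u) * (1 + u))⁻¹ * ((1 + s ^ 2 * u) * (1 - u))
        rw [inv_mul_eq_div, div_eq_div_iff (mul_ne_zero (mul_ne_zero hq0 h0) hu1') he]; ring
    rw [hM u, entries, Matrix.diagonal_smul]
  -- factor U = 2⁻¹ • V
  have hUV : U = (2 : K)⁻¹ • V := by
    rw [hU, hV]
    ext i j
    fin_cases i <;> fin_cases j <;>
      norm_num [Matrix.smul_apply, smul_eq_mul, inv_mul_cancel₀ hchar, neg_div, one_div]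
  -- the polynomial identity with integer-entry V
  have diag3 : ∀ x y z : K, Matrix.diagonal ![x, y, z] = !![x, 0, 0; 0, y, 0; 0, 0, z] := by
    intro x y z; ext i j; fin_cases i <;> fin_cases j <;> rfl
  have poly : (4 : K) • (D a * V * D (s * a * b) * V * D b) =
      V * D b * V * D (s * a * b) * V * D a * V := by
    simp only [hD, hV, diag3, Matrix.mul_fin_three]
    ext i j
    fin_cases i <;> fin_cases j <;>
      · norm_num [Matrix.smul_apply, smul_eq_mul]
        ring
  rw [key a ha0 ha1 ha1', key b hb0 hb1 hb1', key _ hab0 hab1 hab1', hUV]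
  simp only [Matrix.smul_mul, Matrix.mul_smul, smul_smul]
  rw [← poly, smul_smul]
  congr 1
  have h2 : (2 : K) * (2 : K)⁻¹ = 1 := mul_inv_cancel₀ hchar
  linear_combination (-(c a * c b * c (s * a * b) * (2:K)⁻¹ ^ 2 * (1 + 2 * (2:K)⁻¹))) * h2
end

section
/- Let b : ℕ^{r+1} → ℂ satisfy: b(k) = 0 unless k_{r+1} is even, k_{r+1} ≥ 2, and k_i ≤ k_{r+1} for all 1 ≤ i ≤ r; and |b(k)| ≤ C·q^{(1/2+ε)|k| − 1} for all k. Then for every z ∈ ℂ^{r+1} with |z_i| ≤ q^{−1/2+ε} for 1 ≤ i ≤ r and |z_{r+1}| ≤ q^{−σ}, the family (b(k)·z^k)_{k∈ℕ^{r+1}} is absolutely summable and |Σ_k b(k)·z^k| ≤ C·q^{−2σ+(4r+2)ε}·(1 − q^{−2ε})^{−r}·(1 − q^{1−2σ+(4r+2)ε})^{−1}. -/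
open Finset

/-!
Write `m = k_{r+1}`. On the support of `b`, where every `k_i ≤ m`, the bounds on `b` and `z` give
`‖b k z^k‖ ≤ C q⁻¹ u^m ∏_{i ≤ r} t^(m - k_i)` with `t = q^(-2ε) < 1` and
`u = q^(1/2 + (2r+1)ε - σ) < 1`. Each exponent `m - k_i` runs over `0, …, m`, contributing at most
`(1 - t)⁻¹`, and the sum of `u^m` over even `m ≥ 2` is `u² / (1 - u²)`; finally `q⁻¹ u² = q^(-2σ + (4r+2)ε)`.
-/

theorem hasSum_prod_ite_pow_sub {ι R : Type*} [Fintype ι] [DecidableEq ι] [CommSemiring R]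
    [TopologicalSpace R] (t : R) (m : ℕ) :
    HasSum (fun v : ι → ℕ => ∏ i, if v i ≤ m then t ^ (m - v i) else 0)
      ((∑ j ∈ range (m + 1), t ^ j) ^ Fintype.card ι) := by
  have hsupp : ∀ v ∉ Fintype.piFinset fun _ : ι => range (m + 1),
      (∏ i, if v i ≤ m then t ^ (m - v i) else 0) = 0 := by
    intro v hv
    obtain ⟨i, hi⟩ : ∃ i, ¬v i ≤ m := by
      simpa [Fintype.mem_piFinset, Nat.lt_succ_iff] using hv
    exact prod_eq_zero (mem_univ i) (if_neg hi)
  convert (hasSum_sum_of_ne_finset_zero hsupp : HasSum _ _) using 1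
  calc (∑ j ∈ range (m + 1), t ^ j) ^ Fintype.card ι
      = ∏ _i : ι, ∑ j ∈ range (m + 1), if j ≤ m then t ^ (m - j) else 0 := by
        rw [prod_const, card_univ, ← sum_range_reflect]
        congr 1
        refine sum_congr rfl fun j hj => ?_
        rw [if_pos (Nat.lt_succ_iff.mp (mem_range.mp hj)), Nat.add_sub_cancel]
    _ = _ := prod_univ_sum _ _

theorem hasSum_ite_even_two_le_pow {u : ℝ} (hu : |u| < 1) :
    HasSum (fun m => if Even m ∧ 2 ≤ m then u ^ m else 0) (u ^ 2 * (1 - u ^ 2)⁻¹) := by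
  have hinj : Function.Injective fun n : ℕ => 2 * (n + 1) := fun a b h => by simpa using h
  rw [← hinj.hasSum_iff]
  · have hcomp : ((fun m => if Even m ∧ 2 ≤ m then u ^ m else 0) ∘ fun n => 2 * (n + 1)) =
        fun n => u ^ 2 * (u ^ 2) ^ n := by
      funext n
      rw [Function.comp_apply, if_pos ⟨⟨n + 1, by ring⟩, by omega⟩]
      ring
    rw [hcomp]
    exact (hasSum_geometric_of_lt_one (sq_nonneg u) ((sq_lt_one_iff_abs_lt_one u).2 hu)).mul_left _
  · intro m hm
    rw [if_neg]
    rintro ⟨⟨c, rfl⟩, h2⟩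
    exact hm ⟨c - 1, show 2 * (c - 1 + 1) = c + c by omega⟩

theorem summable_and_tsum_le_of_slices {β γ : Type*} {f : β × γ → ℝ} (hf : 0 ≤ f)
    (hslice : ∀ b, Summable fun c => f (b, c)) {B : β → ℝ} (hle : ∀ b, ∑' c, f (b, c) ≤ B b)
    (hB : Summable B) : Summable f ∧ ∑' p, f p ≤ ∑' b, B b := by
  have houter : Summable fun b => ∑' c, f (b, c) :=
    hB.of_nonneg_of_le (fun b => tsum_nonneg fun c => hf (b, c)) hle
  have hsum : Summable f := (summable_prod_of_nonneg hf).2 ⟨hslice, houter⟩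
  exact ⟨hsum, (hsum.tsum_prod' hslice).trans_le (houter.tsum_le_tsum hle hB)⟩

def evenMajorant (r : ℕ) (t u : ℝ) (k : Fin (r + 1) → ℕ) : ℝ :=
  (if Even (k (Fin.last r)) ∧ 2 ≤ k (Fin.last r) then u ^ k (Fin.last r) else 0) *
    ∏ i : Fin r, if k i.castSucc ≤ k (Fin.last r) then t ^ (k (Fin.last r) - k i.castSucc) else 0

section evenMajorant

variable {r : ℕ} {t u : ℝ}

theorem evenMajorant_nonneg (ht : 0 ≤ t) (hu : 0 ≤ u) (k : Fin (r + 1) → ℕ) :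
    0 ≤ evenMajorant r t u k := by
  unfold evenMajorant
  positivity

theorem evenMajorant_snoc (v : Fin r → ℕ) (m : ℕ) :
    evenMajorant r t u (Fin.snoc v m) =
      (if Even m ∧ 2 ≤ m then u ^ m else 0) * ∏ i, if v i ≤ m then t ^ (m - v i) else 0 := by
  simp only [evenMajorant, Fin.snoc_last, Fin.snoc_castSucc]

theorem summable_evenMajorant_and_tsum_le (ht0 : 0 ≤ t) (ht1 : t < 1) (hu0 : 0 ≤ u)
    (hu1 : u < 1) :
    Summable (evenMajorant r t u) ∧
      ∑' k, evenMajorant r t u k ≤ (1 - t)⁻¹ ^ r * (u ^ 2 * (1 - u ^ 2)⁻¹) := by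
  have heven := hasSum_ite_even_two_le_pow (abs_lt.2 ⟨by linarith, hu1⟩)
  have hgeom (m : ℕ) : ∑ j ∈ range (m + 1), t ^ j ≤ (1 - t)⁻¹ := by
    rw [range_eq_Ico]
    simpa using geom_sum_Ico_le_of_lt_one (m := 0) (n := m + 1) ht0 ht1
  let e := Fin.snocEquiv fun _ : Fin (r + 1) => ℕ
  obtain ⟨hsum, hle⟩ := summable_and_tsum_le_of_slices (f := evenMajorant r t u ∘ e)
    (fun _ => evenMajorant_nonneg ht0 hu0 _)
    (fun m => by
      show Summable fun v => evenMajorant r t u (Fin.snoc v m)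
      simp only [evenMajorant_snoc]
      exact ((hasSum_prod_ite_pow_sub t m).summable.mul_left _))
    (B := fun m => (if Even m ∧ 2 ≤ m then u ^ m else 0) * (1 - t)⁻¹ ^ r)
    (fun m => by
      show ∑' v, evenMajorant r t u (Fin.snoc v m) ≤ _
      simp only [evenMajorant_snoc, tsum_mul_left,
        (hasSum_prod_ite_pow_sub t m).tsum_eq, Fintype.card_fin]
      gcongr
      exact hgeom m)
    (heven.summable.mul_right _)
  refine ⟨e.summable_iff.1 hsum, ?_⟩
  rw [← e.tsum_eq]
  calc _ ≤ _ := hle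
    _ = _ := by rw [tsum_mul_right, heven.tsum_eq, mul_comm]

theorem norm_prod_pow_le_rpow {ι 𝕜 : Type*} [Fintype ι] [NormedField 𝕜] {q : ℝ} (hq : 0 < q)
    {z : ι → 𝕜} {a : ι → ℝ} (hz : ∀ j, ‖z j‖ ≤ q ^ a j) (k : ι → ℕ) :
    ‖∏ j, z j ^ k j‖ ≤ q ^ ∑ j, a j * k j := by
  rw [norm_prod, Real.rpow_sum_of_pos hq]
  gcongr with j
  rw [norm_pow, Real.rpow_mul_natCast hq.le]
  exact pow_le_pow_left₀ (norm_nonneg _) (hz j) _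

theorem norm_mul_prod_pow_le {r : ℕ} {q C α β γ : ℝ} (hq : 0 < q) {c : ℂ}
    {z : Fin (r + 1) → ℂ} {k : Fin (r + 1) → ℕ} (hk : ∀ i : Fin r, k i.castSucc ≤ k (Fin.last r))
    (hc : ‖c‖ ≤ C * q ^ (γ * ∑ j, (k j : ℝ) - 1))
    (hz : ∀ i : Fin r, ‖z i.castSucc‖ ≤ q ^ α) (hzlast : ‖z (Fin.last r)‖ ≤ q ^ β) :
    ‖c * ∏ j, z j ^ k j‖ ≤ C * q ^ (-1 : ℝ) * (q ^ (γ + β + r * (γ + α))) ^ k (Fin.last r) *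
      ∏ i : Fin r, (q ^ (-(γ + α))) ^ (k (Fin.last r) - k i.castSucc) := by
  set a : Fin (r + 1) → ℝ := Fin.lastCases β fun _ => α
  have hz' : ∀ j, ‖z j‖ ≤ q ^ a j :=
    Fin.lastCases (by simpa [a] using hzlast) fun i => by simpa [a] using hz i
  calc ‖c * ∏ j, z j ^ k j‖
      ≤ C * q ^ (γ * ∑ j, (k j : ℝ) - 1) * q ^ ∑ j, a j * k j := by
        rw [norm_mul]
        exact mul_le_mul hc (norm_prod_pow_le_rpow hq hz' k) (norm_nonneg _)
          ((norm_nonneg _).trans hc)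
    _ = _ := by
        simp only [← Real.rpow_mul_natCast hq.le, ← Real.rpow_sum_of_pos hq, mul_assoc,
          ← Real.rpow_add hq]
        congr 2
        simp only [Fin.sum_univ_castSucc, a, Fin.lastCases_last, Fin.lastCases_castSucc,
          Nat.cast_sub (hk _), mul_sub, sum_sub_distrib, sum_const, card_univ, Fintype.card_fin,
          ← mul_sum, nsmul_eq_mul]
        ring

theorem norm_mul_prod_pow_le_evenMajorant {r : ℕ} {q C α β γ : ℝ} (hq : 0 < q) (hC : 0 ≤ C)
    {b : (Fin (r + 1) → ℕ) → ℂ} {z : Fin (r + 1) → ℂ}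
    (hsupp : ∀ k : Fin (r + 1) → ℕ,
      ¬(Even (k (Fin.last r)) ∧ 2 ≤ k (Fin.last r) ∧
          ∀ i : Fin r, k i.castSucc ≤ k (Fin.last r)) → b k = 0)
    (hbound : ∀ k : Fin (r + 1) → ℕ, ‖b k‖ ≤ C * q ^ (γ * ∑ j, (k j : ℝ) - 1))
    (hz : ∀ i : Fin r, ‖z i.castSucc‖ ≤ q ^ α) (hzlast : ‖z (Fin.last r)‖ ≤ q ^ β)
    (k : Fin (r + 1) → ℕ) :
    ‖b k * ∏ j, z j ^ k j‖ ≤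
      C * q ^ (-1 : ℝ) * evenMajorant r (q ^ (-(γ + α))) (q ^ (γ + β + r * (γ + α))) k := by
  by_cases hk : Even (k (Fin.last r)) ∧ 2 ≤ k (Fin.last r) ∧
      ∀ i : Fin r, k i.castSucc ≤ k (Fin.last r)
  · obtain ⟨heven, htwo, hle⟩ := hk
    rw [evenMajorant, if_pos ⟨heven, htwo⟩, prod_congr rfl fun i _ => if_pos (hle i), ← mul_assoc]
    exact norm_mul_prod_pow_le hq hle (hbound k) hz hzlast
  · rw [hsupp k hk, zero_mul, norm_zero]
    have := evenMajorant_nonneg (r := r) (Real.rpow_nonneg hq.le (-(γ + α)))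
      (Real.rpow_nonneg hq.le (γ + β + r * (γ + α))) k
    positivity

theorem even_part_estimate_general (r : ℕ) (q : ℝ) (hq : 1 < q)
    (C : ℝ) (hC : 0 ≤ C) (ε σ : ℝ) (hε : 0 < ε)
    (hcond : 1 - 2 * σ + (4 * (r : ℝ) + 2) * ε < 0)
    (b : (Fin (r + 1) → ℕ) → ℂ)
    (hsupp : ∀ k : Fin (r + 1) → ℕ,
      ¬(Even (k (Fin.last r)) ∧ 2 ≤ k (Fin.last r) ∧
          ∀ i : Fin r, k i.castSucc ≤ k (Fin.last r)) → b k = 0)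
    (hbound : ∀ k : Fin (r + 1) → ℕ,
      ‖b k‖ ≤ C * q ^ ((1 / 2 + ε) * (∑ j, (k j : ℝ)) - 1))
    (z : Fin (r + 1) → ℂ)
    (hz : ∀ i : Fin r, ‖z i.castSucc‖ ≤ q ^ (-(1 / 2) + ε))
    (hzlast : ‖z (Fin.last r)‖ ≤ q ^ (-σ)) :
    Summable (fun k : Fin (r + 1) → ℕ => ‖b k * ∏ j, z j ^ k j‖) ∧
    ‖∑' k : Fin (r + 1) → ℕ, b k * ∏ j, z j ^ k j‖ ≤
      C * q ^ (-2 * σ + (4 * (r : ℝ) + 2) * ε) * ((1 - q ^ (-2 * ε))⁻¹) ^ r *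
        (1 - q ^ (1 - 2 * σ + (4 * (r : ℝ) + 2) * ε))⁻¹ := by
  have hq0 : 0 < q := one_pos.trans hq
  have hdom := norm_mul_prod_pow_le_evenMajorant hq0 hC hsupp hbound hz hzlast
  rw [show -(1 / 2 + ε + (-(1 / 2) + ε)) = -2 * ε by ring] at hdom
  set u := q ^ (1 / 2 + ε + -σ + r * (1 / 2 + ε + (-(1 / 2) + ε)))
  have hu2 : u ^ 2 = q ^ (1 - 2 * σ + (4 * (r : ℝ) + 2) * ε) := by
    rw [← Real.rpow_mul_natCast hq0.le]
    congr 1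
    push_cast
    ring
  obtain ⟨hsum, hle⟩ := summable_evenMajorant_and_tsum_le (r := r) (t := q ^ (-2 * ε)) (u := u)
    (Real.rpow_nonneg hq0.le _) (Real.rpow_lt_one_of_one_lt_of_neg hq (by linarith))
    (Real.rpow_nonneg hq0.le _) (Real.rpow_lt_one_of_one_lt_of_neg hq (by linarith))
  have hnorm : Summable fun k => ‖b k * ∏ j, z j ^ k j‖ :=
    (hsum.mul_left _).of_nonneg_of_le (fun _ => norm_nonneg _) hdom
  refine ⟨hnorm, ?_⟩
  calc ‖∑' k, b k * ∏ j, z j ^ k j‖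
      ≤ ∑' k, C * q ^ (-1 : ℝ) * evenMajorant r (q ^ (-2 * ε)) u k :=
        (norm_tsum_le_tsum_norm hnorm).trans (hnorm.tsum_le_tsum hdom (hsum.mul_left _))
    _ ≤ C * q ^ (-1 : ℝ) * ((1 - q ^ (-2 * ε))⁻¹ ^ r * (u ^ 2 * (1 - u ^ 2)⁻¹)) := by
        rw [tsum_mul_left]
        gcongr
    _ = _ := by
        have hsplit : q ^ (-2 * σ + (4 * (r : ℝ) + 2) * ε) =
            q ^ (-1 : ℝ) * q ^ (1 - 2 * σ + (4 * (r : ℝ) + 2) * ε) := by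
          rw [← Real.rpow_add hq0]
          ring_nf
        rw [hu2, hsplit]
        ring

/-- Estimate for the even part of the local series: if the coefficients `b(k)` are supported
on tuples with `k_{r+1}` even, `k_{r+1} ≥ 2` and `k_i ≤ k_{r+1}` for `i ≤ r`, and satisfy
`|b(k)| ≤ C q^{(1/2+ε)|k| - 1}`, then for `|z_i| ≤ q^{-1/2+ε}` (`i ≤ r`) and
`|z_{r+1}| ≤ q^{-σ}` the series `∑ b(k) z^k` is absolutely summable, with sum of absolute
value at most `C q^{-2σ+(4r+2)ε} (1-q^{-2ε})^{-r} (1-q^{1-2σ+(4r+2)ε})^{-1}`. -/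
theorem even_part_estimate (r : ℕ) (hr : 1 ≤ r) (q : ℝ) (hq : 1 < q)
    (C : ℝ) (hC : 0 ≤ C) (ε σ : ℝ) (hε : 0 < ε) (hσ : 1 / 2 < σ)
    (hcond : 1 - 2 * σ + (4 * (r : ℝ) + 2) * ε < 0)
    (b : (Fin (r + 1) → ℕ) → ℂ)
    (hsupp : ∀ k : Fin (r + 1) → ℕ,
      ¬(Even (k (Fin.last r)) ∧ 2 ≤ k (Fin.last r) ∧
          ∀ i : Fin r, k i.castSucc ≤ k (Fin.last r)) → b k = 0)
    (hbound : ∀ k : Fin (r + 1) → ℕ,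
      ‖b k‖ ≤ C * q ^ ((1 / 2 + ε) * (∑ j, (k j : ℝ)) - 1))
    (z : Fin (r + 1) → ℂ)
    (hz : ∀ i : Fin r, ‖z i.castSucc‖ ≤ q ^ (-(1 / 2) + ε))
    (hzlast : ‖z (Fin.last r)‖ ≤ q ^ (-σ)) :
    Summable (fun k : Fin (r + 1) → ℕ => ‖b k * ∏ j, z j ^ k j‖) ∧
    ‖∑' k : Fin (r + 1) → ℕ, b k * ∏ j, z j ^ k j‖ ≤
      C * q ^ (-2 * σ + (4 * (r : ℝ) + 2) * ε) * ((1 - q ^ (-2 * ε))⁻¹) ^ r *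
        (1 - q ^ (1 - 2 * σ + (4 * (r : ℝ) + 2) * ε))⁻¹ :=
  even_part_estimate_general r q hq C hC ε σ hε hcond b hsupp hbound z hz hzlast
end evenMajorant
end

section
/- Let b : ℕ^{r+1} → ℂ satisfy: b(k) = 0 unless k_{r+1} is odd, k_{r+1} ≥ 3, and k_i ≤ k_{r+1} − 1 for all 1 ≤ i ≤ r; and |b(k)| ≤ C·q^{(1/2+ε)|k| − 1} for all k. Then for every z ∈ ℂ^{r+1} with |z_i| ≤ q^{−1/2+ε} for 1 ≤ i ≤ r and |z_{r+1}| ≤ q^{−σ}, the family (b(k)·z^k)_{k∈ℕ^{r+1}} is absolutely summable and |Σ_k b(k)·z^k| ≤ C·q^{1/2−3σ+(4r+3)ε}·(1 − q^{−2ε})^{−r}·(1 − q^{1−2σ+(4r+2)ε})^{−1}. -/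
open Finset

/-! Write `k = (v, m)` with `m = k_{r+1}`. The hypotheses give
`‖b(k) z^k‖ ≤ (C/q) a^{v_1 + ⋯ + v_r} w^m` with `a = q^{2ε}` and `w = q^{1/2+ε-σ}`, and `b(k) = 0`
unless `m` is odd, `m ≥ 3` and every `v_i < m`. Summing the geometric sums over these `v` gives at
most `(C/q) (a - 1)^{-r} ρ^m` with `ρ = w a^r = q^{(1-2σ+(4r+2)ε)/2} < 1`, and summing over odd
`m ≥ 3` leaves `ρ³ / (1 - ρ²)`. Working with nonnegative terms fiberwise gives summability and the
bound at once. -/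

theorem summable_and_tsum_le_of_sum_fiber_le {α β : Type*} {f : α × β → ℝ} (hf : 0 ≤ f)
    (s : α → Finset β) (hs : ∀ m v, v ∉ s m → f (m, v) = 0) {G : α → ℝ} {c : ℝ}
    (hG : HasSum G c) (hfG : ∀ m, ∑ v ∈ s m, f (m, v) ≤ G m) :
    Summable f ∧ ∑' p, f p ≤ c := by
  have hfiber : ∀ m, ∑' v, f (m, v) ≤ G m := fun m => (tsum_eq_sum (hs m)).trans_le (hfG m)
  have hsum : Summable f := (summable_prod_of_nonneg hf).2
    ⟨fun m => summable_of_ne_finset_zero (hs m),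
      hG.summable.of_nonneg_of_le (fun m => tsum_nonneg fun v => hf _) hfiber⟩
  refine ⟨hsum, ?_⟩
  calc ∑' p, f p = ∑' m, ∑' v, f (m, v) := hsum.tsum_prod
    _ ≤ ∑' m, G m := hsum.prod.tsum_le_tsum hfiber hG.summable
    _ = c := hG.tsum_eq

theorem geom_sum_range_le_pow_div {a : ℝ} (ha : 1 < a) (m : ℕ) :
    ∑ j ∈ range m, a ^ j ≤ a ^ m / (a - 1) := by
  rw [le_div_iff₀ (sub_pos.2 ha), geom_sum_mul_of_one_le ha.le]
  linarith

theorem sum_piFinset_range_prod_pow_le {a : ℝ} (ha : 1 < a) (r m : ℕ) :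
    ∑ v ∈ Fintype.piFinset (fun _ : Fin r => range m), ∏ i, a ^ v i ≤ (a ^ m / (a - 1)) ^ r := by
  rw [← prod_univ_sum, prod_const, card_univ, Fintype.card_fin]
  exact pow_le_pow_left₀ (sum_nonneg fun _ _ => by positivity) (geom_sum_range_le_pow_div ha m) r

theorem hasSum_ite_odd_three_le_pow {ρ : ℝ} (hρ : |ρ| < 1) :
    HasSum (fun m : ℕ => if Odd m ∧ 3 ≤ m then ρ ^ m else 0) (ρ ^ 3 * (1 - ρ ^ 2)⁻¹) := by
  have hinj : Function.Injective (fun n : ℕ => 2 * n + 3) := fun _ _ h => by simp only at h; omega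
  rw [← hinj.hasSum_iff]
  · have hterm : (fun m : ℕ => if Odd m ∧ 3 ≤ m then ρ ^ m else 0) ∘ (fun n => 2 * n + 3) =
        fun n => ρ ^ 3 * (ρ ^ 2) ^ n := by
      funext n
      rw [Function.comp_apply, if_pos ⟨⟨n + 1, by ring⟩, by omega⟩, pow_add, pow_mul, mul_comm]
    rw [hterm]
    exact (hasSum_geometric_of_abs_lt_one (by rwa [abs_pow, sq_lt_one_iff₀ (abs_nonneg ρ)])).mul_left _
  · intro m hm
    exact if_neg fun ⟨⟨t, ht⟩, h3⟩ => hm ⟨t - 1, by simp only; omega⟩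

theorem summable_and_tsum_le_of_le_odd_majorant {r : ℕ} {A a w : ℝ} (hA : 0 ≤ A) (ha : 1 < a)
    (hw : 0 ≤ w) (hρ : w * a ^ r < 1) {f : ℕ × (Fin r → ℕ) → ℝ} (hf0 : 0 ≤ f)
    (hf : ∀ m v, f (m, v) ≤
      if Odd m ∧ 3 ≤ m ∧ ∀ i, v i < m then A * (∏ i, a ^ v i) * w ^ m else 0) :
    Summable f ∧
      ∑' p, f p ≤ A * ((a - 1)⁻¹) ^ r * ((w * a ^ r) ^ 3 * (1 - (w * a ^ r) ^ 2)⁻¹) := by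
  have hρ0 : 0 ≤ w * a ^ r := by positivity
  refine summable_and_tsum_le_of_sum_fiber_le hf0 (fun m => Fintype.piFinset fun _ => range m) ?_
    ((hasSum_ite_odd_three_le_pow (abs_lt.2 ⟨by linarith, hρ⟩)).mul_left (A * ((a - 1)⁻¹) ^ r)) ?_
  · intro m v hv
    refine le_antisymm ((hf m v).trans_eq (if_neg fun h => hv ?_)) (hf0 _)
    simpa [Fintype.mem_piFinset] using h.2.2
  · intro m
    split_ifs with hm
    · calc ∑ v ∈ Fintype.piFinset (fun _ => range m), f (m, v)
          ≤ ∑ v ∈ Fintype.piFinset (fun _ => range m), A * (∏ i, a ^ v i) * w ^ m :=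
            sum_le_sum fun v hv => (hf m v).trans_eq
              (if_pos ⟨hm.1, hm.2, by simpa [Fintype.mem_piFinset] using hv⟩)
        _ = A * w ^ m * ∑ v ∈ Fintype.piFinset (fun _ => range m), ∏ i, a ^ v i := by
            rw [← sum_mul, ← mul_sum]; ring
        _ ≤ A * w ^ m * (a ^ m / (a - 1)) ^ r :=
            mul_le_mul_of_nonneg_left (sum_piFinset_range_prod_pow_le ha r m) (by positivity)
        _ = A * ((a - 1)⁻¹) ^ r * (w * a ^ r) ^ m := by ring
    · rw [mul_zero]
      exact sum_nonpos fun v _ => (hf m v).trans_eq (if_neg fun h => hm ⟨h.1, h.2.1⟩)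

theorem norm_mul_prod_pow_le_s9 {𝕜 ι : Type*} [NormedField 𝕜] [Fintype ι] {β : 𝕜} {A t : ℝ}
    {c : ι → ℝ} {z : ι → 𝕜} {k : ι → ℕ} (hz : ∀ j, ‖z j‖ ≤ c j)
    (hβ : ‖β‖ ≤ A * t ^ ∑ j, k j) :
    ‖β * ∏ j, z j ^ k j‖ ≤ A * ∏ j, (t * c j) ^ k j := by
  simp_rw [norm_mul, norm_prod, norm_pow, mul_pow, prod_mul_distrib, prod_pow_eq_pow_sum,
    ← mul_assoc]
  exact mul_le_mul hβ (prod_le_prod (fun j _ => by positivity)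
    fun j _ => pow_le_pow_left₀ (norm_nonneg _) (hz j) _) (by positivity) ((norm_nonneg _).trans hβ)

theorem norm_mul_monomial_snoc_le {r : ℕ} {q C ε σ : ℝ} (hq : 0 < q) {b : (Fin (r + 1) → ℕ) → ℂ}
    (hsupp : ∀ k : Fin (r + 1) → ℕ,
      ¬(Odd (k (Fin.last r)) ∧ 3 ≤ k (Fin.last r) ∧
          ∀ i : Fin r, k i.castSucc ≤ k (Fin.last r) - 1) → b k = 0)
    (hbound : ∀ k : Fin (r + 1) → ℕ,
      ‖b k‖ ≤ C * q ^ ((1 / 2 + ε) * (∑ j, (k j : ℝ)) - 1))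
    {z : Fin (r + 1) → ℂ} (hz : ∀ i : Fin r, ‖z i.castSucc‖ ≤ q ^ (-(1 / 2) + ε))
    (hzlast : ‖z (Fin.last r)‖ ≤ q ^ (-σ)) (m : ℕ) (v : Fin r → ℕ) :
    ‖b (Fin.snoc v m) * ∏ j, z j ^ (Fin.snoc v m : Fin (r + 1) → ℕ) j‖ ≤
      if Odd m ∧ 3 ≤ m ∧ ∀ i, v i < m then
        C / q * (∏ i, (q ^ (2 * ε)) ^ v i) * (q ^ (1 / 2 + ε - σ)) ^ m
      else 0 := by
  split_ifs with h
  · have hb : ∀ k, ‖b k‖ ≤ C / q * (q ^ (1 / 2 + ε)) ^ ∑ j, k j := fun k => (hbound k).trans_eq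
      (by rw [Real.rpow_sub hq, Real.rpow_one, ← Nat.cast_sum, Real.rpow_mul_natCast hq.le]; ring)
    have hzc : ∀ j, ‖z j‖ ≤ (Fin.snoc (fun _ => q ^ (-(1 / 2) + ε)) (q ^ (-σ)) : Fin (r + 1) → ℝ) j :=
      Fin.lastCases (by simpa using hzlast) fun i => by simpa using hz i
    refine (norm_mul_prod_pow_le_s9 hzc (hb _)).trans_eq ?_
    simp only [Fin.prod_univ_castSucc, Fin.snoc_castSucc, Fin.snoc_last, ← Real.rpow_add hq]
    ring_nf
  · have hb0 : b (Fin.snoc v m) = 0 := hsupp _ <| by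
      simp only [Fin.snoc_last, Fin.snoc_castSucc]
      exact fun ⟨hodd, h3, hv⟩ => h ⟨hodd, h3, fun i => by have := hv i; omega⟩
    rw [hb0, zero_mul, norm_zero]

theorem odd_part_constant_eq {q : ℝ} (hq : 0 < q) (r : ℕ) (C ε σ : ℝ) :
    C / q * ((q ^ (2 * ε) - 1)⁻¹) ^ r *
      ((q ^ ((1 - 2 * σ + (4 * (r : ℝ) + 2) * ε) / 2)) ^ 3 *
        (1 - (q ^ ((1 - 2 * σ + (4 * (r : ℝ) + 2) * ε) / 2)) ^ 2)⁻¹) =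
      C * q ^ (1 / 2 - 3 * σ + (4 * (r : ℝ) + 3) * ε) * ((1 - q ^ (-2 * ε))⁻¹) ^ r *
        (1 - q ^ (1 - 2 * σ + (4 * (r : ℝ) + 2) * ε))⁻¹ := by
  set s := 1 - 2 * σ + (4 * (r : ℝ) + 2) * ε
  have hsub : q ^ (2 * ε) - 1 = q ^ (2 * ε) * (1 - q ^ (-2 * ε)) := by
    rw [mul_one_sub, ← Real.rpow_add hq, show 2 * ε + -2 * ε = 0 by ring, Real.rpow_zero]
  have hsq : (q ^ (s / 2)) ^ 2 = q ^ s := by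
    rw [← Real.rpow_mul_natCast hq.le]; norm_num
  have hexp : q ^ (1 / 2 - 3 * σ + (4 * (r : ℝ) + 3) * ε) =
      q⁻¹ * ((q ^ (2 * ε)) ^ r)⁻¹ * (q ^ (s / 2)) ^ 3 := by
    rw [← Real.rpow_mul_natCast hq.le, ← Real.rpow_mul_natCast hq.le, ← Real.rpow_neg_one,
      ← Real.rpow_neg hq.le, ← Real.rpow_add hq, ← Real.rpow_add hq]
    congr 1
    ring
  rw [hsub, hsq, hexp, mul_inv, mul_pow, inv_pow]
  ring

theorem odd_part_estimate_general (r : ℕ) (q : ℝ) (hq : 1 < q)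
    (C : ℝ) (hC : 0 ≤ C) (ε σ : ℝ) (hε : 0 < ε)
    (hcond : 1 - 2 * σ + (4 * (r : ℝ) + 2) * ε < 0)
    (b : (Fin (r + 1) → ℕ) → ℂ)
    (hsupp : ∀ k : Fin (r + 1) → ℕ,
      ¬(Odd (k (Fin.last r)) ∧ 3 ≤ k (Fin.last r) ∧
          ∀ i : Fin r, k i.castSucc ≤ k (Fin.last r) - 1) → b k = 0)
    (hbound : ∀ k : Fin (r + 1) → ℕ,
      ‖b k‖ ≤ C * q ^ ((1 / 2 + ε) * (∑ j, (k j : ℝ)) - 1))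
    (z : Fin (r + 1) → ℂ)
    (hz : ∀ i : Fin r, ‖z i.castSucc‖ ≤ q ^ (-(1 / 2) + ε))
    (hzlast : ‖z (Fin.last r)‖ ≤ q ^ (-σ)) :
    Summable (fun k : Fin (r + 1) → ℕ => ‖b k * ∏ j, z j ^ k j‖) ∧
    ‖∑' k : Fin (r + 1) → ℕ, b k * ∏ j, z j ^ k j‖ ≤
      C * q ^ (1 / 2 - 3 * σ + (4 * (r : ℝ) + 3) * ε) * ((1 - q ^ (-2 * ε))⁻¹) ^ r *
        (1 - q ^ (1 - 2 * σ + (4 * (r : ℝ) + 2) * ε))⁻¹ := by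
  have hq0 : 0 < q := one_pos.trans hq
  have hρ : q ^ (1 / 2 + ε - σ) * (q ^ (2 * ε)) ^ r =
      q ^ ((1 - 2 * σ + (4 * (r : ℝ) + 2) * ε) / 2) := by
    rw [← Real.rpow_mul_natCast hq0.le, ← Real.rpow_add hq0]
    ring_nf
  have hρ1 : q ^ (1 / 2 + ε - σ) * (q ^ (2 * ε)) ^ r < 1 :=
    hρ ▸ Real.rpow_lt_one_of_one_lt_of_neg hq (by linarith)
  obtain ⟨hsum, hle⟩ := summable_and_tsum_le_of_le_odd_majorant
    (f := fun p => ‖b (Fin.snoc p.2 p.1) * ∏ j, z j ^ (Fin.snoc p.2 p.1 : Fin (r + 1) → ℕ) j‖)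
    (div_nonneg hC hq0.le) (Real.one_lt_rpow hq (by positivity)) (by positivity) hρ1
    (fun _ => norm_nonneg _) (norm_mul_monomial_snoc_le hq0 hsupp hbound hz hzlast)
  have hsum' : Summable (fun k : Fin (r + 1) → ℕ => ‖b k * ∏ j, z j ^ k j‖) :=
    (Fin.snocEquiv fun _ => ℕ).summable_iff.1 hsum
  refine ⟨hsum', (norm_tsum_le_tsum_norm hsum').trans ?_⟩
  rw [← (Fin.snocEquiv fun _ => ℕ).tsum_eq, ← odd_part_constant_eq hq0, ← hρ]
  exact (tsum_congr fun p => rfl).trans_le hle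

/-- Estimate for the odd part of the local series: if the coefficients `b(k)` are supported
on tuples with `k_{r+1}` odd, `k_{r+1} ≥ 3` and `k_i ≤ k_{r+1} - 1` for `i ≤ r`, and satisfy
`|b(k)| ≤ C q^{(1/2+ε)|k| - 1}`, then for `|z_i| ≤ q^{-1/2+ε}` (`i ≤ r`) and
`|z_{r+1}| ≤ q^{-σ}` the series `∑ b(k) z^k` is absolutely summable, with sum of absolute
value at most `C q^{1/2-3σ+(4r+3)ε} (1-q^{-2ε})^{-r} (1-q^{1-2σ+(4r+2)ε})^{-1}`. -/
theorem odd_part_estimate (r : ℕ) (hr : 1 ≤ r) (q : ℝ) (hq : 1 < q)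
    (C : ℝ) (hC : 0 ≤ C) (ε σ : ℝ) (hε : 0 < ε) (hσ : 1 / 2 < σ)
    (hcond : 1 - 2 * σ + (4 * (r : ℝ) + 2) * ε < 0)
    (b : (Fin (r + 1) → ℕ) → ℂ)
    (hsupp : ∀ k : Fin (r + 1) → ℕ,
      ¬(Odd (k (Fin.last r)) ∧ 3 ≤ k (Fin.last r) ∧
          ∀ i : Fin r, k i.castSucc ≤ k (Fin.last r) - 1) → b k = 0)
    (hbound : ∀ k : Fin (r + 1) → ℕ,
      ‖b k‖ ≤ C * q ^ ((1 / 2 + ε) * (∑ j, (k j : ℝ)) - 1))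
    (z : Fin (r + 1) → ℂ)
    (hz : ∀ i : Fin r, ‖z i.castSucc‖ ≤ q ^ (-(1 / 2) + ε))
    (hzlast : ‖z (Fin.last r)‖ ≤ q ^ (-σ)) :
    Summable (fun k : Fin (r + 1) → ℕ => ‖b k * ∏ j, z j ^ k j‖) ∧
    ‖∑' k : Fin (r + 1) → ℕ, b k * ∏ j, z j ^ k j‖ ≤
      C * q ^ (1 / 2 - 3 * σ + (4 * (r : ℝ) + 3) * ε) * ((1 - q ^ (-2 * ε))⁻¹) ^ r *
        (1 - q ^ (1 - 2 * σ + (4 * (r : ℝ) + 2) * ε))⁻¹ :=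
  odd_part_estimate_general r q hq C hC ε σ hε hcond b hsupp hbound z hz hzlast
end

section
/- Let 0 < R₁ < R₀ < R be real numbers, let S ⊂ ℂ be a finite set with R₁ < |ξ₀| < R₀ for every ξ₀ ∈ S, and let F be holomorphic on {ξ ∈ ℂ : |ξ| < R} \ S, such that every ξ₀ ∈ S is a simple pole of F: the function ξ ↦ (ξ − ξ₀)·F(ξ) extends holomorphically across ξ₀ with value ρ(ξ₀) there. Let (c_D)_{D∈ℕ} be the Taylor coefficients of F at 0 and let M := sup_{|ξ| = R₀} |F(ξ)|. Then for every D ∈ ℕ: |c_D + Σ_{ξ₀∈S} ρ(ξ₀)·ξ₀^{−D−1}| ≤ M·R₀^{−D}. -/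
/-!
Subtracting the polar part `P(ξ) = ∑ ρ(ξ₀) / (ξ - ξ₀)` from `F` removes the poles, so `F - P`
extends to a function `g` holomorphic on the disk of radius `R`. Near `0`, expanding
`-ρ(ξ₀) / (ξ - ξ₀)` as a geometric series shows that the `D`-th Taylor coefficient of `g` is
`c_D + ∑ ρ(ξ₀) ξ₀^(-D-1)`, and by Cauchy's formula it equals
`(2πi)⁻¹ ∮_{|z| = R₀} z^(-D-1) g(z) dz`. On that circle `g = F - P`, and each
`∮ z^(-D-1) / (z - ξ₀) dz` vanishes (the residues at `0` and at `ξ₀` cancel), so the coefficient is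
`(2πi)⁻¹ ∮ z^(-D-1) F(z) dz`, whose norm is at most `M R₀^(-D)`.
-/

open Complex Metric Filter Set Topology Real

theorem hasFPowerSeriesOnBall_ofScalars_of_hasSum {𝕜 : Type*} [RCLike 𝕜]
    {f : 𝕜 → 𝕜} {a : ℕ → 𝕜} {r : NNReal} (hr : 0 < r)
    (h : ∀ ξ : 𝕜, ‖ξ‖ < r → HasSum (fun n => a n * ξ ^ n) (f ξ)) :
    HasFPowerSeriesOnBall f (FormalMultilinearSeries.ofScalars 𝕜 a) 0 r where
  r_le := by
    refine ENNReal.le_of_forall_nnreal_lt fun r' hr' => ?_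
    have hsum := (h ((r' : ℝ) : 𝕜) (by simpa using hr')).summable
    refine FormalMultilinearSeries.le_radius_of_tendsto _ (l := 0) ?_
    simpa [FormalMultilinearSeries.ofScalars_norm] using hsum.tendsto_atTop_zero.norm
  r_pos := by simpa using hr
  hasSum {y} hy := by
    simpa [FormalMultilinearSeries.ofScalars_apply_eq, mul_comm] using h y (by simpa using hy)

theorem coeff_eq_circleIntegral_of_hasSum {g : ℂ → ℂ} {b : ℕ → ℂ} {r R : ℝ} (hr : 0 < r)
    (hR : 0 < R) (hg : DifferentiableOn ℂ g (closedBall 0 R))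
    (hb : ∀ ξ : ℂ, ‖ξ‖ < r → HasSum (fun n => b n * ξ ^ n) (g ξ)) (n : ℕ) :
    b n = (2 * π * I)⁻¹ * ∮ z in C(0, R), z⁻¹ ^ (n + 1) * g z := by
  lift r to NNReal using hr.le
  lift R to NNReal using hR.le
  have hseries := (hasFPowerSeriesOnBall_ofScalars_of_hasSum (mod_cast hr) hb).hasFPowerSeriesAt
    |>.eq_formalMultilinearSeries (hg.hasFPowerSeriesOnBall (mod_cast hR)).hasFPowerSeriesAt
  have := congr($hseries n fun _ => 1)
  rw [FormalMultilinearSeries.ofScalars_apply_eq, cauchyPowerSeries_apply] at this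
  simpa [pow_succ, mul_assoc] using this

theorem continuousOn_inv_pow_mul {f : ℂ → ℂ} {R : ℝ} (hR : R ≠ 0)
    (hf : ContinuousOn f (sphere 0 R)) (n : ℕ) :
    ContinuousOn (fun z => z⁻¹ ^ n * f z) (sphere 0 R) :=
  ((continuousOn_inv₀.mono fun _ hz => ne_of_mem_sphere hz hR).pow n).mul hf

theorem continuousOn_sub_inv_sphere {R : ℝ} {a : ℂ} (ha : ‖a‖ ≠ R) :
    ContinuousOn (fun z => (z - a)⁻¹) (sphere 0 R) :=
  (continuous_sub_right a).continuousOn.inv₀ fun _ hz =>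
    sub_ne_zero.2 fun h => ha (h ▸ mem_sphere_zero_iff_norm.1 hz)

theorem circleIntegral_inv_pow_succ_mul_inv_sub {R : ℝ} {a : ℂ} (ha : ‖a‖ < R) (n : ℕ) :
    ∮ z in C(0, R), z⁻¹ ^ (n + 1) * (z - a)⁻¹ = 0 := by
  have hR : 0 < R := (norm_nonneg a).trans_lt ha
  have hpow (k : ℕ) : ∮ z in C(0, R), z⁻¹ ^ (k + 2) = 0 := by
    simpa only [sub_zero, zpow_neg, zpow_natCast, inv_pow] using
      circleIntegral.integral_sub_zpow_of_ne (n := -((k + 2 : ℕ) : ℤ)) (by omega) 0 0 R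
  rcases eq_or_ne a 0 with rfl | ha₀
  · simpa only [sub_zero, ← pow_succ] using hpow n
  have hint (k : ℕ) : CircleIntegrable (fun z : ℂ => z⁻¹ ^ k * (z - a)⁻¹) 0 R :=
    (continuousOn_inv_pow_mul hR.ne' (continuousOn_sub_inv_sphere ha.ne) k).circleIntegrable hR.le
  have hint_pow (k : ℕ) : CircleIntegrable (fun z : ℂ => z⁻¹ ^ k) 0 R := by
    simpa using (continuousOn_inv_pow_mul hR.ne' continuousOn_const k (f := fun _ => 1)
      ).circleIntegrable hR.le
  -- partial fractions: `1 / (z (z - a)) = a⁻¹ (1 / (z - a) - 1 / z)`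
  have hstep (k : ℕ) : ∮ z in C(0, R), z⁻¹ ^ (k + 1) * (z - a)⁻¹ =
      a⁻¹ * ((∮ z in C(0, R), z⁻¹ ^ k * (z - a)⁻¹) - ∮ z in C(0, R), z⁻¹ ^ (k + 1)) := by
    rw [← circleIntegral.integral_sub (hint k) (hint_pow _), ← circleIntegral.integral_const_mul]
    refine circleIntegral.integral_congr hR.le fun z hz => ?_
    have hz₀ : z ≠ 0 := ne_of_mem_sphere hz hR.ne'
    have hza : z - a ≠ 0 := sub_ne_zero.2 fun h => ha.ne (h ▸ mem_sphere_zero_iff_norm.1 hz)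
    simp only [inv_pow]
    field_simp
    ring
  have hinv : ∮ z in C(0, R), (z - a)⁻¹ = ∮ z in C(0, R), z⁻¹ ^ 1 := by
    simp only [pow_one]
    rw [circleIntegral.integral_sub_inv_of_mem_ball (by simpa using ha)]
    simpa using (circleIntegral.integral_sub_inv_of_mem_ball (mem_ball_self (x := (0 : ℂ)) hR)).symm
  -- the two integrals on the right of `hstep` agree: both are `2πi` for `k = 0` and `0` after
  induction n with
  | zero => simpa [hinv] using hstep 0
  | succ k ih => rw [hstep, ih, hpow, sub_zero, mul_zero]

theorem norm_two_pi_I_inv_mul_circleIntegral_inv_pow_mul_le {f : ℂ → ℂ} {R M : ℝ} (hR : 0 < R)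
    (hf : ∀ z : ℂ, ‖z‖ = R → ‖f z‖ ≤ M) (n : ℕ) :
    ‖(2 * π * I)⁻¹ * ∮ z in C(0, R), z⁻¹ ^ (n + 1) * f z‖ ≤ M * R ^ (-(n : ℤ)) := by
  have hbound (z : ℂ) (hz : z ∈ sphere 0 R) : ‖z⁻¹ ^ (n + 1) * f z‖ ≤ R⁻¹ ^ (n + 1) * M := by
    rw [mem_sphere_zero_iff_norm] at hz
    rw [norm_mul, norm_pow, norm_inv, hz]
    exact mul_le_mul_of_nonneg_left (hf z hz) (by positivity)
  calc _ ≤ R * (R⁻¹ ^ (n + 1) * M) :=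
        circleIntegral.norm_two_pi_i_inv_smul_integral_le_of_norm_le_const hR.le hbound
    _ = M * R ^ (-(n : ℤ)) := by
      rw [zpow_neg, zpow_natCast, pow_succ, inv_pow]
      field_simp

theorem isLittleO_sub_inv_of_tendsto_sub_mul {f : ℂ → ℂ} {c : ℂ}
    (h : Tendsto (fun z => (z - c) * f z) (𝓝[≠] c) (𝓝 0)) :
    (fun z => f z - f c) =o[𝓝[≠] c] fun z => (z - c)⁻¹ := by
  have hsub : Tendsto (fun z => (z - c) * f c) (𝓝[≠] c) (𝓝 0) := by
    simpa using ((continuous_sub_right c).tendsto c).mono_left nhdsWithin_le_nhds |>.mul_const (f c)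
  rw [Asymptotics.isLittleO_iff_tendsto'
    (eventually_nhdsWithin_of_forall (s := {c}ᶜ) fun _ hz h =>
      absurd (sub_eq_zero.1 (inv_eq_zero.1 h)) hz)]
  simpa [div_inv_eq_mul, mul_sub, mul_comm] using h.sub hsub

theorem exists_differentiableOn_eqOn_of_tendsto_sub_mul {f : ℂ → ℂ} {U : Set ℂ} {S : Finset ℂ}
    (hU : IsOpen U) (hf : DifferentiableOn ℂ f (U \ S))
    (hS : ∀ c ∈ S, Tendsto (fun z => (z - c) * f z) (𝓝[≠] c) (𝓝 0)) :
    ∃ g : ℂ → ℂ, DifferentiableOn ℂ g U ∧ EqOn g f (U \ S) := by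
  classical
  refine ⟨fun z => if z ∈ S then limUnder (𝓝[≠] z) f else f z, fun z hz => ?_,
    fun z hz => if_neg hz.2⟩
  by_cases hzS : z ∈ S
  · have hV : U \ ↑(S.erase z) ∈ 𝓝 z :=
      (hU.sdiff (S.erase z).finite_toSet.isClosed).mem_nhds ⟨hz, by simp⟩
    have hupd := differentiableOn_update_limUnder_of_isLittleO hV
      (hf.mono fun w hw => ⟨hw.1.1, fun hwS => hw.1.2 (by simpa [hw.2] using hwS)⟩)
      (isLittleO_sub_inv_of_tendsto_sub_mul (hS z hzS))
    refine ((hupd.differentiableAt hV).congr_of_eventuallyEq ?_).differentiableWithinAt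
    filter_upwards [hV] with w hw
    by_cases hwz : w = z
    · simp [hwz, hzS]
    · simp [hwz, show w ∉ S from fun hwS => hw.2 (by simpa [hwz] using hwS)]
  · have hV : U \ ↑S ∈ 𝓝 z := (hU.sdiff S.finite_toSet.isClosed).mem_nhds ⟨hz, hzS⟩
    refine ((hf.differentiableAt hV).congr_of_eventuallyEq ?_).differentiableWithinAt
    filter_upwards [hV] with w hw using if_neg hw.2

noncomputable def polarPart (S : Finset ℂ) (ρ : ℂ → ℂ) (z : ℂ) : ℂ :=
  ∑ ξ₀ ∈ S, ρ ξ₀ * (z - ξ₀)⁻¹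

theorem differentiableOn_polarPart (S : Finset ℂ) (ρ : ℂ → ℂ) :
    DifferentiableOn ℂ (polarPart S ρ) (↑S)ᶜ :=
  DifferentiableOn.fun_sum fun ξ₀ hξ₀ => (differentiableOn_const _).mul <|
    (differentiableOn_id.sub_const ξ₀).inv fun z hz =>
      sub_ne_zero.2 fun h => hz (by simpa [show z = ξ₀ from h] using hξ₀)

theorem tendsto_sub_mul_polarPart {S : Finset ℂ} {ξ₀ : ℂ} (ρ : ℂ → ℂ) (hξ₀ : ξ₀ ∈ S) :
    Tendsto (fun z => (z - ξ₀) * polarPart S ρ z) (𝓝[≠] ξ₀) (𝓝 (ρ ξ₀)) := by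
  -- the other poles contribute a function that is continuous at `ξ₀` and vanishes there
  set rest := fun z => (z - ξ₀) * polarPart (S.erase ξ₀) ρ z
  have hrest : Tendsto rest (𝓝[≠] ξ₀) (𝓝 0) := by
    have hcont : ContinuousAt rest ξ₀ :=
      (continuous_sub_right ξ₀).continuousAt.mul <|
        (differentiableOn_polarPart _ ρ).continuousOn.continuousAt
          ((S.erase ξ₀).finite_toSet.isClosed.isOpen_compl.mem_nhds (by simp))
    simpa [rest] using hcont.tendsto.mono_left nhdsWithin_le_nhds
  rw [← add_zero (ρ ξ₀)]
  refine (hrest.const_add (ρ ξ₀)).congr' (eventually_nhdsWithin_of_forall fun z hz => ?_)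
  have hz' : z - ξ₀ ≠ 0 := sub_ne_zero.2 hz
  simp only [rest, polarPart, ← Finset.add_sum_erase S _ hξ₀, mul_add]
  field_simp

theorem exists_differentiableOn_eqOn_sub_polarPart {F ρ : ℂ → ℂ} {U : Set ℂ} {S : Finset ℂ}
    (hU : IsOpen U) (hF : DifferentiableOn ℂ F (U \ S))
    (hpole : ∀ ξ₀ ∈ S, Tendsto (fun z => (z - ξ₀) * F z) (𝓝[≠] ξ₀) (𝓝 (ρ ξ₀))) :
    ∃ g : ℂ → ℂ, DifferentiableOn ℂ g U ∧ EqOn g (F - polarPart S ρ) (U \ S) :=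
  exists_differentiableOn_eqOn_of_tendsto_sub_mul hU
    (hF.sub ((differentiableOn_polarPart S ρ).mono fun _ hz => hz.2)) fun ξ₀ hξ₀ => by
      simpa [mul_sub] using (hpole ξ₀ hξ₀).sub (tendsto_sub_mul_polarPart ρ hξ₀)

theorem hasSum_zpow_mul_pow_inv_sub {a ξ : ℂ} (h : ‖ξ‖ < ‖a‖) :
    HasSum (fun n : ℕ => a ^ (-(n : ℤ) - 1) * ξ ^ n) (a - ξ)⁻¹ := by
  have ha : a ≠ 0 := norm_pos_iff.1 ((norm_nonneg ξ).trans_lt h)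
  have hgeom := (hasSum_geometric_of_norm_lt_one (ξ := ξ / a) (by
    rwa [norm_div, div_lt_one ((norm_nonneg ξ).trans_lt h)])).mul_left a⁻¹
  have hval : a⁻¹ * (1 - ξ / a)⁻¹ = (a - ξ)⁻¹ := by
    rw [← mul_inv, mul_sub, mul_one, mul_div_cancel₀ _ ha]
  have hterm (n : ℕ) : a⁻¹ * (ξ / a) ^ n = a ^ (-(n : ℤ) - 1) * ξ ^ n := by
    rw [sub_eq_add_neg, zpow_add₀ ha, zpow_neg, zpow_natCast, zpow_neg_one, div_pow]
    ring
  simpa only [hval, hterm] using hgeom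

theorem hasSum_neg_polarPart {S : Finset ℂ} {ξ : ℂ} (ρ : ℂ → ℂ) (h : ∀ ξ₀ ∈ S, ‖ξ‖ < ‖ξ₀‖) :
    HasSum (fun n : ℕ => (∑ ξ₀ ∈ S, ρ ξ₀ * ξ₀ ^ (-(n : ℤ) - 1)) * ξ ^ n) (-polarPart S ρ ξ) := by
  have hterm (ξ₀ : ℂ) (hξ₀ : ξ₀ ∈ S) :=
    (hasSum_zpow_mul_pow_inv_sub (h ξ₀ hξ₀)).mul_left (ρ ξ₀)
  have hneg : -polarPart S ρ ξ = ∑ ξ₀ ∈ S, ρ ξ₀ * (ξ₀ - ξ)⁻¹ := by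
    simp only [polarPart, ← Finset.sum_neg_distrib, ← mul_neg, ← inv_neg, neg_sub]
  simpa only [hneg, Finset.sum_mul, mul_assoc] using hasSum_sum hterm

theorem circleIntegral_inv_pow_succ_mul_polarPart {R : ℝ} {S : Finset ℂ} (ρ : ℂ → ℂ)
    (hS : ∀ ξ₀ ∈ S, ‖ξ₀‖ < R) (n : ℕ) :
    ∮ z in C(0, R), z⁻¹ ^ (n + 1) * polarPart S ρ z = 0 := by
  have hint (ξ₀ : ℂ) (hξ₀ : ξ₀ ∈ S) :
      CircleIntegrable (fun z => ρ ξ₀ * (z⁻¹ ^ (n + 1) * (z - ξ₀)⁻¹)) 0 R := by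
    have hR : 0 < R := (norm_nonneg ξ₀).trans_lt (hS ξ₀ hξ₀)
    exact (continuousOn_const.mul (continuousOn_inv_pow_mul hR.ne'
      (continuousOn_sub_inv_sphere (hS ξ₀ hξ₀).ne) (n + 1))).circleIntegrable hR.le
  simp only [polarPart, Finset.mul_sum, mul_left_comm _ (ρ _)]
  rw [circleIntegral.integral_fun_sum hint]
  refine Finset.sum_eq_zero fun ξ₀ hξ₀ => ?_
  rw [circleIntegral.integral_const_mul,
    circleIntegral_inv_pow_succ_mul_inv_sub (hS ξ₀ hξ₀), mul_zero]

theorem circleIntegral_inv_pow_succ_mul_sub_polarPart {f : ℂ → ℂ} {R : ℝ} {S : Finset ℂ}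
    (ρ : ℂ → ℂ) (hR : 0 < R) (hf : ContinuousOn f (sphere 0 R))
    (hS : ∀ ξ₀ ∈ S, ‖ξ₀‖ < R) (n : ℕ) :
    ∮ z in C(0, R), z⁻¹ ^ (n + 1) * (f z - polarPart S ρ z) =
      ∮ z in C(0, R), z⁻¹ ^ (n + 1) * f z := by
  have hP : ContinuousOn (polarPart S ρ) (sphere 0 R) :=
    (differentiableOn_polarPart S ρ).continuousOn.mono fun z hz hzS =>
      (hS z hzS).ne (mem_sphere_zero_iff_norm.1 hz)
  simp only [mul_sub]
  rw [circleIntegral.integral_sub ((continuousOn_inv_pow_mul hR.ne' hf _).circleIntegrable hR.le)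
    ((continuousOn_inv_pow_mul hR.ne' hP _).circleIntegrable hR.le),
    circleIntegral_inv_pow_succ_mul_polarPart ρ hS, sub_zero]

/-- If `F` is holomorphic on the disk `|ξ| < R` away from a finite set `S` of simple poles
lying in the annulus `R₁ < |ξ| < R₀` (with residues `ρ(ξ₀)`), `(c_D)` are the Taylor
coefficients of `F` at `0`, and `M` bounds `|F|` on the circle `|ξ| = R₀`, then
`|c_D + ∑_{ξ₀ ∈ S} ρ(ξ₀) ξ₀^{-D-1}| ≤ M R₀^{-D}` for every `D ∈ ℕ`. -/
theorem coeff_approx_by_polar_parts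
    (R R₀ R₁ : ℝ) (h1 : 0 < R₁) (h2 : R₁ < R₀) (h3 : R₀ < R)
    (S : Finset ℂ) (hS : ∀ ξ₀ ∈ S, R₁ < ‖ξ₀‖ ∧ ‖ξ₀‖ < R₀)
    (F : ℂ → ℂ) (ρ : ℂ → ℂ)
    (hF : DifferentiableOn ℂ F ({ξ : ℂ | ‖ξ‖ < R} \ ↑S))
    (hpole : ∀ ξ₀ ∈ S,
      Filter.Tendsto (fun ξ : ℂ => (ξ - ξ₀) * F ξ) (nhdsWithin ξ₀ {ξ₀}ᶜ) (nhds (ρ ξ₀)))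
    (c : ℕ → ℂ)
    (hc : ∀ ξ : ℂ, ‖ξ‖ < R₁ → HasSum (fun D : ℕ => c D * ξ ^ D) (F ξ))
    (M : ℝ) (hM : ∀ ξ : ℂ, ‖ξ‖ = R₀ → ‖F ξ‖ ≤ M)
    (D : ℕ) :
    ‖c D + ∑ ξ₀ ∈ S, ρ ξ₀ * ξ₀ ^ (-(D : ℤ) - 1)‖ ≤ M * R₀ ^ (-(D : ℤ)) := by
  have hR₀ : 0 < R₀ := h1.trans h2
  obtain ⟨g, hg, hgFP⟩ :=
    exists_differentiableOn_eqOn_sub_polarPart (isOpen_lt continuous_norm continuous_const) hF hpole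
  have hb (ξ : ℂ) (hξ : ‖ξ‖ < R₁) : HasSum
      (fun n : ℕ => (c n + ∑ ξ₀ ∈ S, ρ ξ₀ * ξ₀ ^ (-(n : ℤ) - 1)) * ξ ^ n) (g ξ) := by
    have hξS : ξ ∉ S := fun hξS => (hξ.trans (hS ξ hξS).1).false
    rw [hgFP ⟨hξ.trans (h2.trans h3), hξS⟩, Pi.sub_apply, sub_eq_add_neg]
    simpa only [add_mul] using
      (hc ξ hξ).add (hasSum_neg_polarPart ρ fun ξ₀ hξ₀ => hξ.trans (hS ξ₀ hξ₀).1)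
  have hcircle : sphere (0 : ℂ) R₀ ⊆ {ξ | ‖ξ‖ < R} \ S := fun z hz => by
    rw [mem_sphere_zero_iff_norm] at hz
    exact ⟨hz.trans_lt h3, fun hzS => (hS z hzS).2.ne hz⟩
  calc _ = ‖(2 * π * I)⁻¹ * ∮ z in C(0, R₀), z⁻¹ ^ (D + 1) * g z‖ := by
        rw [coeff_eq_circleIntegral_of_hasSum h1 hR₀
          (hg.mono fun z hz => (mem_closedBall_zero_iff.1 hz).trans_lt h3) hb D]
    _ = ‖(2 * π * I)⁻¹ * ∮ z in C(0, R₀), z⁻¹ ^ (D + 1) * F z‖ := by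
        rw [circleIntegral.integral_congr (g := fun z => z⁻¹ ^ (D + 1) * (F z - polarPart S ρ z))
            hR₀.le fun z hz => congrArg _ (hgFP (hcircle hz)),
          circleIntegral_inv_pow_succ_mul_sub_polarPart ρ hR₀ (hF.continuousOn.mono hcircle)
            fun ξ₀ hξ₀ => (hS ξ₀ hξ₀).2]
    _ ≤ M * R₀ ^ (-(D : ℤ)) := norm_two_pi_I_inv_mul_circleIntegral_inv_pow_mul_le hR₀ hM D
end

section
/- Let K be a field, let r ≥ 1, and let z₁,…,z_r ∈ K be nonzero with z_i ≠ z_j for all i ≠ j and z_i·z_j ≠ 1 for all 1 ≤ i, j ≤ r (in particular z_i² ≠ 1). Then (−1)^{r(r−1)/2}·Π_{1≤i<j≤r}(z_j − z_i)²(1 − z_i z_j) / [Π_{i=1}^{r}Π_{j≠i}(1 − z_i z_j)(1 − z_i z_j^{−1}) · Π_{i=1}^{r} z_i^{r−1}(1 − z_i²)] = Π_{1≤k≤l≤r}(1 − z_k z_l)^{−1}, all denominators being nonzero under the stated hypotheses. -/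
open Finset

private lemma ite_mul_one_split {K : Type*} [Monoid K] (p : Prop) [Decidable p] (a b : K) :
    (if p then a * b else 1) = (if p then a else 1) * (if p then b else 1) := by
  split <;> simp

private lemma prod_offdiag_split {K : Type*} [CommMonoid K] {r : ℕ} (f : Fin r → Fin r → K) :
    (∏ i : Fin r, ∏ j : Fin r, if j ≠ i then f i j else 1)
      = (∏ i : Fin r, ∏ j : Fin r, if i < j then f i j else 1) *
        (∏ i : Fin r, ∏ j : Fin r, if i < j then f j i else 1) := by
  have h : ∀ i j : Fin r, (if j ≠ i then f i j else 1)
      = (if i < j then f i j else 1) * (if j < i then f i j else 1) := by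
    intro i j
    rcases lt_trichotomy i j with h | h | h
    · simp [h, h.ne', not_lt.mpr h.le]
    · simp [h]
    · simp [h, h.ne, not_lt.mpr h.le]
  simp_rw [h, Finset.prod_mul_distrib]
  congr 1
  rw [Finset.prod_comm]

private lemma prod_ite_sign {K : Type*} [CommRing K] (r : ℕ) :
    (∏ i : Fin r, ∏ j : Fin r, if i < j then (-1 : K) else 1)
      = (-1 : K) ^ (r * (r - 1) / 2) := by
  have h1 : ∀ i : Fin r, (∏ j : Fin r, if i < j then (-1 : K) else 1)
      = (-1 : K) ^ (r - 1 - (i : ℕ)) := by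
    intro i
    rw [Finset.prod_ite, Finset.prod_const, Finset.prod_const_one, mul_one]
    congr 1
    rw [show Finset.univ.filter (fun j => i < j) = Finset.Ioi i from by ext j; simp,
      Fin.card_Ioi]
  simp_rw [h1]
  rw [Finset.prod_pow_eq_pow_sum]
  congr 1
  rw [Fin.sum_univ_eq_sum_range (fun k => r - 1 - k) r,
    Finset.sum_range_reflect (fun k => k) r, Finset.sum_range_id]

/-- The rational-function identity used in the residue computation of the generalized
contour-integral lemma: for nonzero, pairwise distinct `z_i` with `z_i z_j ≠ 1`,
`(-1)^{r(r-1)/2} ∏_{i<j} (z_j - z_i)² (1 - z_i z_j)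
  / (∏_i ∏_{j ≠ i} (1 - z_i z_j)(1 - z_i z_j⁻¹) · ∏_i z_i^{r-1} (1 - z_i²))
  = ∏_{1≤k≤l≤r} (1 - z_k z_l)^{-1}`. -/
theorem vandermonde_residue_identity {K : Type*} [Field K] (r : ℕ) (hr : 1 ≤ r)
    (z : Fin r → K) (hz0 : ∀ i, z i ≠ 0)
    (hne : ∀ i j, i ≠ j → z i ≠ z j) (hzz : ∀ i j, z i * z j ≠ 1) :
    ((-1 : K) ^ (r * (r - 1) / 2) *
          ∏ i : Fin r, ∏ j : Fin r,
            (if i < j then (z j - z i) ^ 2 * (1 - z i * z j) else 1)) /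
        ((∏ i : Fin r, ∏ j : Fin r,
            if j ≠ i then (1 - z i * z j) * (1 - z i * (z j)⁻¹) else 1) *
          ∏ i : Fin r, z i ^ (r - 1) * (1 - z i ^ 2))
      = (∏ k : Fin r, ∏ l : Fin r, if k ≤ l then 1 - z k * z l else 1)⁻¹ := by
  set m : ℕ := r * (r - 1) / 2 with hm
  set V : K := ∏ i : Fin r, ∏ j : Fin r, (if i < j then z j - z i else 1) with hV
  set a : K := ∏ i : Fin r, ∏ j : Fin r, (if i < j then 1 - z i * z j else 1) with ha
  set c : K := ∏ i : Fin r, (1 - z i ^ 2) with hc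
  set p : K := ∏ i : Fin r, z i with hp
  have hpne : p ≠ 0 := Finset.prod_ne_zero_iff.mpr fun i _ => hz0 i
  have hVne : V ≠ 0 := by
    refine Finset.prod_ne_zero_iff.mpr fun i _ => Finset.prod_ne_zero_iff.mpr fun j _ => ?_
    split_ifs with h
    · exact sub_ne_zero.mpr (hne j i h.ne')
    · exact one_ne_zero
  have hane : a ≠ 0 := by
    refine Finset.prod_ne_zero_iff.mpr fun i _ => Finset.prod_ne_zero_iff.mpr fun j _ => ?_
    split_ifs with h
    · exact sub_ne_zero.mpr (hzz i j).symm
    · exact one_ne_zero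
  have hcne : c ≠ 0 := Finset.prod_ne_zero_iff.mpr fun i _ => by
    rw [pow_two]; exact sub_ne_zero.mpr (hzz i i).symm
  -- numerator
  have hN : (∏ i : Fin r, ∏ j : Fin r,
      (if i < j then (z j - z i) ^ 2 * (1 - z i * z j) else 1)) = V * V * a := by
    have h : ∀ i j : Fin r, (if i < j then (z j - z i) ^ 2 * (1 - z i * z j) else 1)
        = (if i < j then z j - z i else 1) *
          ((if i < j then z j - z i else 1) * (if i < j then 1 - z i * z j else 1)) := by
      intro i j; split_ifs
      · ring
      · simp
    simp_rw [h, Finset.prod_mul_distrib]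
    rw [hV, ha]
    ring
  -- (1 - z i z j) part of denominator
  have hB1 : (∏ i : Fin r, ∏ j : Fin r, if j ≠ i then (1 - z i * z j) else 1) = a * a := by
    rw [prod_offdiag_split fun i j => 1 - z i * z j]
    congr 1
    exact Finset.prod_congr rfl fun i _ => Finset.prod_congr rfl fun j _ => by
      rw [mul_comm]
  -- (z j - z i) off-diagonal part
  have hE : (∏ i : Fin r, ∏ j : Fin r, if j ≠ i then (z j - z i) else 1)
      = (-1 : K) ^ m * (V * V) := by
    rw [prod_offdiag_split fun i j => z j - z i]
    have h2 : (∏ i : Fin r, ∏ j : Fin r, if i < j then z i - z j else 1)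
        = (-1 : K) ^ m * V := by
      have h : ∀ i j : Fin r, (if i < j then z i - z j else 1)
          = (if i < j then (-1 : K) else 1) * (if i < j then z j - z i else 1) := by
        intro i j; split_ifs
        · ring
        · simp
      simp_rw [h, Finset.prod_mul_distrib]
      rw [prod_ite_sign, hV, hm]
    rw [h2, hV]
    ring
  -- (z j)⁻¹ off-diagonal part
  have hF : (∏ i : Fin r, ∏ j : Fin r, if j ≠ i then (z j)⁻¹ else 1)
      = (p ^ (r - 1))⁻¹ := by
    have h1 : ∀ i : Fin r, (∏ j : Fin r, if j ≠ i then (z j)⁻¹ else 1)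
        = (∏ j : Fin r, if j ≠ i then z j else 1)⁻¹ := by
      intro i
      rw [← Finset.prod_inv_distrib]
      exact Finset.prod_congr rfl fun j _ => by split <;> simp
    rw [Finset.prod_congr rfl fun i _ => h1 i, Finset.prod_inv_distrib]
    congr 1
    have hinner : ∀ i : Fin r, (∏ j : Fin r, if j ≠ i then z j else 1) * z i = p := by
      intro i
      rw [show (∏ j : Fin r, if j ≠ i then z j else 1)
          = ∏ j ∈ Finset.univ.erase i, z j from by
        rw [← Finset.prod_filter]
        congr 1
        ext j; simp [Finset.mem_erase]]
      exact Finset.prod_erase_mul _ _ (Finset.mem_univ i)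
    have h2 : (∏ i : Fin r, ∏ j : Fin r, if j ≠ i then z j else 1) * p = p ^ r := by
      rw [hp, ← Finset.prod_mul_distrib]
      rw [Finset.prod_congr rfl fun i _ => hinner i, Finset.prod_const, Finset.card_univ,
        Fintype.card_fin]
    have h3 : p ^ r = p ^ (r - 1) * p := by
      rw [← pow_succ]
      congr 1
      omega
    exact mul_right_cancel₀ hpne (h2.trans h3)
  -- denominator first big product
  have hD : (∏ i : Fin r, ∏ j : Fin r,
      if j ≠ i then (1 - z i * z j) * (1 - z i * (z j)⁻¹) else 1)
      = (a * a) * ((-1 : K) ^ m * (V * V)) * (p ^ (r - 1))⁻¹ := by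
    have h : ∀ i j : Fin r, (if j ≠ i then (1 - z i * z j) * (1 - z i * (z j)⁻¹) else 1)
        = (if j ≠ i then 1 - z i * z j else 1) *
          ((if j ≠ i then z j - z i else 1) * (if j ≠ i then (z j)⁻¹ else 1)) := by
      intro i j; split_ifs
      · congr 1
        rw [sub_mul, mul_inv_cancel₀ (hz0 j)]
      · simp
    simp_rw [h, Finset.prod_mul_distrib]
    rw [hB1, hE, hF]
    ring
  -- last factor of denominator
  have hD2 : (∏ i : Fin r, z i ^ (r - 1) * (1 - z i ^ 2)) = p ^ (r - 1) * c := by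
    rw [Finset.prod_mul_distrib, Finset.prod_pow, hp, hc]
  -- right-hand side
  have hP : (∏ k : Fin r, ∏ l : Fin r, if k ≤ l then 1 - z k * z l else 1) = a * c := by
    have hpt : ∀ k l : Fin r, (if k ≤ l then 1 - z k * z l else 1)
        = (if k < l then 1 - z k * z l else 1) * (if k = l then 1 - z k * z l else 1) := by
      intro k l
      rcases lt_trichotomy k l with h | h | h
      · simp [h, h.le, h.ne]
      · simp [h]
      · simp [h.ne', not_le.mpr h, not_lt.mpr h.le]
    simp_rw [hpt, Finset.prod_mul_distrib, Finset.prod_ite_eq, Finset.mem_univ, if_true]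
    rw [ha, hc]
    congr 1
    exact Finset.prod_congr rfl fun k _ => by rw [pow_two]
  rw [hN, hD, hD2, hP]
  have hpp : (p : K) ^ (r - 1) ≠ 0 := pow_ne_zero _ hpne
  have hs : ((-1 : K) ^ m) ≠ 0 := pow_ne_zero _ (neg_ne_zero.mpr one_ne_zero)
  field_simp
end

section
/- For every integer r ≥ 4, the determinant of the (r−3)×(r−3) integer matrix whose (i, j) entry, for 1 ≤ i, j ≤ r−3, is the binomial coefficient C(2r+1−2j, i−1), equals (−2)^{(r−3)(r−4)/2}. -/
/-!
Multiplying row `i` of the matrix by `i!` turns `C(x, i)` into the monic degree-`i` polynomial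
`x (x - 1) ⋯ (x - i + 1)`, so `(∏ i!) · det = det V(v)` for the Vandermonde matrix `V(v)` of the
column parameters `v_j = 2r - 1 - 2j`. These form an arithmetic progression with step `-2`, whose
Vandermonde determinant is `(-2)^C(n, 2) ∏ i!`.
-/

open Finset Polynomial

theorem Fin.sum_card_Ioi (n : ℕ) : ∑ i : Fin n, #(Ioi i) = n.choose 2 := by
  simp only [Fin.card_Ioi]
  rw [Fin.sum_univ_eq_sum_range (fun k => n - 1 - k), sum_range_reflect (fun k => k),
    sum_range_id, Nat.choose_two_right]

namespace Matrix

variable {R : Type*} [CommRing R]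

theorem det_vandermonde_const_mul {n : ℕ} (c : R) (v : Fin n → R) :
    (vandermonde fun i => c * v i).det = c ^ n.choose 2 * (vandermonde v).det := by
  simp only [det_vandermonde, ← mul_sub, prod_mul_distrib, prod_const, prod_pow_eq_pow_sum,
    Fin.sum_card_Ioi]

theorem det_vandermonde_natCast (n : ℕ) :
    (vandermonde fun i : Fin n => (i : R)).det = ∏ i : Fin n, ((i : ℕ).factorial : R) := by
  cases n with
  | zero => simp
  | succ n =>
    rw [det_vandermonde_id_eq_superFactorial, ← Nat.prod_range_succ_factorial, Nat.cast_prod,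
      Fin.prod_univ_eq_prod_range (fun k => (k.factorial : R))]

theorem prod_factorial_mul_det_choose [IsDomain R] {n : ℕ} (v : Fin n → ℕ) :
    (∏ i : Fin n, ((i : ℕ).factorial : R)) * (of fun i j : Fin n => ((v j).choose i : R)).det
      = (vandermonde fun j => (v j : R)).det := by
  rw [det_eval_matrixOfPolynomials_eq_det_vandermonde _ (fun i => descPochhammer R i)
      (fun i => descPochhammer_natDegree R i) (fun i => monic_descPochhammer R i),
    ← det_transpose, ← det_mul_row]
  congr 1
  ext i j
  simp [descPochhammer_eval_eq_descFactorial, Nat.descFactorial_eq_factorial_mul_choose]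

end Matrix

open Matrix

theorem det_choose_of_arithmetic_progression {R : Type*} [CommRing R] [IsDomain R] [CharZero R]
    {n : ℕ} (v : Fin n → ℕ) (a b : R) (hv : ∀ j, (v j : R) = a + b * j) :
    (of fun i j : Fin n => ((v j).choose i : R)).det = b ^ n.choose 2 := by
  have hfact : (∏ i : Fin n, ((i : ℕ).factorial : R)) ≠ 0 :=
    prod_ne_zero_iff.mpr fun i _ => Nat.cast_ne_zero.mpr (Nat.factorial_ne_zero _)
  refine mul_left_cancel₀ hfact ?_
  simp_rw [prod_factorial_mul_det_choose, hv, add_comm a, det_vandermonde_add,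
    det_vandermonde_const_mul, det_vandermonde_natCast, mul_comm]

theorem det_binomial_matrix_general (r : ℕ) :
    (Matrix.of fun i j : Fin (r - 3) =>
        ((2 * r + 1 - 2 * ((j : ℕ) + 1)).choose (i : ℕ) : ℤ)).det
      = (-2) ^ ((r - 3) * (r - 4) / 2) := by
  rw [det_choose_of_arithmetic_progression _ (2 * r - 1 : ℤ) (-2), Nat.choose_two_right,
    show r - 4 = r - 3 - 1 by omega]
  intro j
  rw [Nat.cast_sub (by omega)]
  push_cast
  ring

/-- For `r ≥ 4`, the determinant of the `(r-3) × (r-3)` matrix with `(i, j)` entry the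
binomial coefficient `C(2r + 1 - 2j, i - 1)` (for `1 ≤ i, j ≤ r - 3`) equals
`(-2)^{(r-3)(r-4)/2}`. -/
theorem det_binomial_matrix (r : ℕ) (hr : 4 ≤ r) :
    (Matrix.of fun i j : Fin (r - 3) =>
        ((2 * r + 1 - 2 * ((j : ℕ) + 1)).choose (i : ℕ) : ℤ)).det
      = (-2) ^ ((r - 3) * (r - 4) / 2) :=
  det_binomial_matrix_general r
end

section
/- For every integer r ≥ 4, the formal power series P_r(t) ∈ ℚ⟦t⟧ satisfies: its coefficient of t⁰ is 1, its coefficients of t¹ and t² are 0, its coefficient of t³ is −14(r − 2), and its coefficient of t⁴ is −(r⁴ + 12r³ + 59r² − 696r + 1164)/12. That is, P_r(t) = 1 − 14(r−2)t³ − ((r⁴ + 12r³ + 59r² − 696r + 1164)/12)·t⁴ + O(t⁵). -/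
/-!
Every factor of `P_r` is a binomial series `(1 ± X) ^ e` with `e ∈ ℤ` (the inverses are the
negative exponents), whose `k`-th coefficient is `(±1) ^ k * Ring.choose e k`, a polynomial in `e`
of degree `k`. Expanding the Cauchy products up to order `4` therefore turns each claimed
coefficient into a polynomial identity in `r`, once the halved exponents are cast to `ℚ`.
-/

open PowerSeries

theorem PowerSeries.rescale_neg_one_one_add_X_pow {R : Type*} [CommRing R] (n : ℕ) :
    rescale (-1 : R) ((1 + X) ^ n) = (1 - X) ^ n := by
  rw [map_pow, map_add, map_one, rescale_neg_one_X, ← sub_eq_add_neg]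

section CharZeroField

variable {K : Type*} [Field K] [CharZero K]

theorem Ring.choose_eq_prod_range_div (x : K) (k : ℕ) :
    Ring.choose x k = (∏ i ∈ Finset.range k, (x - i)) / k.factorial := by
  rw [Ring.choose_eq_smul, smul_eq_mul, inv_mul_eq_div, ← Polynomial.aeval_eq_smeval,
    Polynomial.aeval_def, Polynomial.eval₂_eq_eval_map, descPochhammer_map,
    descPochhammer_eval_eq_prod_range]

theorem Nat.cast_sub_div_two_of_even {n c : ℕ} (hn : Even n) (hc : Even c) (h : c ≤ n) :
    (((n - c) / 2 : ℕ) : K) = ((n : K) - c) / 2 := by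
  rw [Nat.cast_div (hn.tsub hc).two_dvd two_ne_zero, Nat.cast_sub h, Nat.cast_ofNat]

namespace PowerSeries

theorem coeff_one_add_X_pow_eq_ringChoose (n k : ℕ) :
    coeff k ((1 + X : K⟦X⟧) ^ n) = Ring.choose (n : K) k := by
  rw [← binomialSeries_nat (R := K), binomialSeries_coeff, smul_eq_mul, mul_one]

theorem inv_one_add_X_pow (n : ℕ) : ((1 + X : K⟦X⟧) ^ n)⁻¹ = binomialSeries K (-n : K) := by
  rw [PowerSeries.inv_eq_iff_mul_eq_one (by simp), ← binomialSeries_nat (R := K),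
    ← binomialSeries_add, neg_add_cancel, binomialSeries_zero]

theorem coeff_inv_one_add_X_pow (n k : ℕ) :
    coeff k ((1 + X : K⟦X⟧) ^ n)⁻¹ = Ring.choose (-n : K) k := by
  rw [inv_one_add_X_pow, binomialSeries_coeff, smul_eq_mul, mul_one]

theorem coeff_one_sub_X_pow_eq_ringChoose (n k : ℕ) :
    coeff k ((1 - X : K⟦X⟧) ^ n) = (-1) ^ k * Ring.choose (n : K) k := by
  rw [← rescale_neg_one_one_add_X_pow, coeff_rescale, coeff_one_add_X_pow_eq_ringChoose]

theorem coeff_inv_one_sub_X_pow (n k : ℕ) :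
    coeff k ((1 - X : K⟦X⟧) ^ n)⁻¹ = (-1) ^ k * Ring.choose (-n : K) k := by
  have h : ((1 - X : K⟦X⟧) ^ n)⁻¹ = rescale (-1 : K) ((1 + X) ^ n)⁻¹ := by
    rw [PowerSeries.inv_eq_iff_mul_eq_one (by simp), ← rescale_neg_one_one_add_X_pow, ← map_mul,
      PowerSeries.inv_mul_cancel _ (by simp), map_one]
  rw [h, coeff_rescale, coeff_inv_one_add_X_pow]

end PowerSeries

end CharZeroField

/-- For `r ≥ 4`, the formal power series
`P_r(t) = (1 − t)^{(r²+7r−14)/2} (1 + t)^{(r²+7r−28)/2} · [(t + t²)(t + 6t² + t³)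
+ (1/2)(1 + t)^{4−r} + (1/2)(1 − t)^{−r}(1 + 10t + 20t² + 10t³ + t⁴)]` satisfies
`P_r(t) = 1 − 14(r−2) t³ − ((r⁴ + 12r³ + 59r² − 696r + 1164)/12) t⁴ + O(t⁵)`. -/
theorem P_r_low_order_coefficients (r : ℕ) (hr : 4 ≤ r) :
    let P : PowerSeries ℚ :=
      (1 - X) ^ ((r ^ 2 + 7 * r - 14) / 2) * (1 + X) ^ ((r ^ 2 + 7 * r - 28) / 2) *
        ((X + X ^ 2) * (X + 6 * X ^ 2 + X ^ 3)
          + PowerSeries.C (1 / 2 : ℚ) * ((1 + X) ^ (r - 4))⁻¹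
          + PowerSeries.C (1 / 2 : ℚ) * ((1 - X) ^ r)⁻¹ *
              (1 + 10 * X + 20 * X ^ 2 + 10 * X ^ 3 + X ^ 4))
    PowerSeries.coeff 0 P = 1 ∧
    PowerSeries.coeff 1 P = 0 ∧
    PowerSeries.coeff 2 P = 0 ∧
    PowerSeries.coeff 3 P = -14 * ((r : ℚ) - 2) ∧
    PowerSeries.coeff 4 P =
      -((r : ℚ) ^ 4 + 12 * (r : ℚ) ^ 3 + 59 * (r : ℚ) ^ 2 - 696 * (r : ℚ) + 1164) / 12 := by
  intro P
  have heven : Even (r ^ 2 + 7 * r) := by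
    simp [Nat.even_add, Nat.even_pow, Nat.even_mul, parity_simps]
  have ha := Nat.cast_sub_div_two_of_even (K := ℚ) heven (by decide : Even 14) (by nlinarith)
  have hb := Nat.cast_sub_div_two_of_even (K := ℚ) heven (by decide : Even 28) (by nlinarith)
  have hm := Nat.cast_sub (R := ℚ) hr
  refine ⟨?_, ?_, ?_, ?_, ?_⟩ <;>
  · simp only [P, coeff_mul, Finset.Nat.sum_antidiagonal_eq_sum_range_succ_mk,
      Finset.sum_range_succ, Finset.sum_range_zero, map_add, coeff_one_sub_X_pow_eq_ringChoose,
      coeff_one_add_X_pow_eq_ringChoose, coeff_inv_one_add_X_pow, coeff_inv_one_sub_X_pow,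
      Ring.choose_eq_prod_range_div, coeff_X_pow, coeff_X, coeff_one, ← map_ofNat C, coeff_C,
      Finset.prod_range_succ, Finset.prod_range_zero, Nat.factorial, ha, hb, hm, Nat.cast_pow,
      Nat.cast_add, Nat.cast_mul, Nat.cast_ofNat]
    norm_num <;> ring
end

section
/- Assume r ≥ 3. Fix indices 1 ≤ j₁ < j₂ < j₃ ≤ r and a subset J ⊆ {1,…,r}\{j₁, j₂, j₃}, and set α := e_{j₁} + e_{j₂} + e_{j₃} + 2·Σ_{j∈J} e_j + 2e_{r+1} and β := Σ_{j∈J} e_j + e_{r+1}. Let w_α := w_{j₁}∘w_{j₂}∘w_{j₃}∘w_{r+1}∘Π_{j∈J} w_j ∈ W (the factors w_j for j ∈ J pairwise commute). Then: (i) w_α(α) = e_{r+1}; and (ii) the set of positive real roots γ such that w_α(γ) is a negative real root is exactly {e_j : j ∈ J} ∪ {β, β + e_{j₁}, β + e_{j₂}, β + e_{j₃}}, a set with |J| + 4 elements. -/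
open Finset

/-!
The form `q(k) = ∑_{s ≤ r} k_s (k_s - m) + m²`, `m = k_{r+1}`, is `W`-invariant and equals `1`
on every real root. Coordinatewise, `w_α` sends `k_t ↦ m - k_t` for `t ∈ J`, `m ↦ M` and
`k_{j_i} ↦ M - k_{j_i}`, where `M = ∑_s (∏_{j ∈ J} w_j k)_s - m`, and fixes the other
coordinates. Hence a nonnegative `γ` has `w_α γ ≤ 0` iff it is supported on
`{j₁, j₂, j₃} ∪ J ∪ {r+1}`, `γ_t ≥ m` on `J`, and `M ≤ 0`. On such `γ`, with `a_i = γ_{j_i}`,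
`4 q(γ) = ∑_i (2a_i - m)² + m² + 4 ∑_{t ∈ J} γ_t (γ_t - m)` with every term nonnegative, so
`q(γ) = 1` forces `m ≤ 2`: `m = 0` gives `γ = e_t` with `t ∈ J`, `m = 1` gives `β` plus at most
one `e_{j_i}`, and `m = 2` contradicts `M ≤ 0`.
-/

section Reflections

variable {r : ℕ}

@[simp]
lemma wRefl_castSucc_apply_castSucc (t s : Fin r) (k : Fin (r + 1) → ℤ) :
    wRefl r t.castSucc k s.castSucc =
      if s = t then k (Fin.last r) - k s.castSucc else k s.castSucc := by
  rcases eq_or_ne s t with rfl | h <;> simp [wRefl, wFun, Fin.castSucc_ne_last, *]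

@[simp]
lemma wRefl_castSucc_apply_last (t : Fin r) (k : Fin (r + 1) → ℤ) :
    wRefl r t.castSucc k (Fin.last r) = k (Fin.last r) := by
  simp [wRefl, wFun, (Fin.castSucc_ne_last t).symm]

@[simp]
lemma wRefl_last_apply_castSucc (s : Fin r) (k : Fin (r + 1) → ℤ) :
    wRefl r (Fin.last r) k s.castSucc = k s.castSucc := by
  simp [wRefl, wFun, Fin.castSucc_ne_last]

@[simp]
lemma wRefl_last_apply_last (k : Fin (r + 1) → ℤ) :
    wRefl r (Fin.last r) k (Fin.last r) = ∑ s : Fin r, k s.castSucc - k (Fin.last r) := by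
  simp [wRefl, wFun]

lemma wRefl_mem_weylW (i : Fin (r + 1)) : wRefl r i ∈ weylW r :=
  Subgroup.subset_closure ⟨i, rfl⟩

lemma wRefl_castSucc_commute (i j : Fin r) :
    Commute (wRefl r i.castSucc) (wRefl r j.castSucc) := by
  ext k l : 2
  induction l using Fin.lastCases with
  | last => simp
  | cast s =>
    simp only [Equiv.Perm.mul_apply, wRefl_castSucc_apply_castSucc, wRefl_castSucc_apply_last]
    split_ifs <;> simp_all

def reflProd (r : ℕ) (L : List (Fin r)) : Equiv.Perm (Fin (r + 1) → ℤ) :=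
  (L.map fun j => wRefl r j.castSucc).prod

@[simp]
lemma reflProd_apply_last (L : List (Fin r)) (k : Fin (r + 1) → ℤ) :
    reflProd r L k (Fin.last r) = k (Fin.last r) := by
  induction L with
  | nil => rfl
  | cons a L ih =>
    simp only [reflProd, List.map_cons, List.prod_cons, Equiv.Perm.mul_apply] at ih ⊢
    rw [wRefl_castSucc_apply_last, ih]

lemma reflProd_apply_castSucc {L : List (Fin r)} (hL : L.Nodup) (k : Fin (r + 1) → ℤ)
    (s : Fin r) :
    reflProd r L k s.castSucc =
      if s ∈ L then k (Fin.last r) - k s.castSucc else k s.castSucc := by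
  induction L with
  | nil => rfl
  | cons a L ih =>
    obtain ⟨haL, hL⟩ := List.nodup_cons.mp hL
    have := reflProd_apply_last L k
    simp only [reflProd, List.map_cons, List.prod_cons, Equiv.Perm.mul_apply] at ih this ⊢
    rw [wRefl_castSucc_apply_castSucc, this, ih hL]
    rcases eq_or_ne s a with rfl | hsa <;> simp [*]

lemma reflProd_mem_weylW (L : List (Fin r)) : reflProd r L ∈ weylW r :=
  Subgroup.list_prod_mem _ <| by simp [wRefl_mem_weylW]

end Reflections

section RealRoots

variable {r : ℕ}

lemma apply_mem_realRoots {w : Equiv.Perm (Fin (r + 1) → ℤ)} (hw : w ∈ weylW r)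
    {γ : Fin (r + 1) → ℤ} (hγ : γ ∈ realRoots r) : w γ ∈ realRoots r := by
  obtain ⟨w', hw', i, rfl⟩ := hγ
  exact ⟨w * w', mul_mem hw hw', i, rfl⟩

lemma single_mem_realRoots (i : Fin (r + 1)) : Pi.single i 1 ∈ realRoots r :=
  ⟨1, one_mem _, i, rfl⟩

/-- The `W`-invariant quadratic form `(γ|γ)/2 = ∑ k_s² + m² - m ∑ k_s`, `m = k_{r+1}`,
written so that each reflection `w_s`, `s ≤ r`, fixes it summand by summand. -/
def qform (r : ℕ) (k : Fin (r + 1) → ℤ) : ℤ :=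
  ∑ s : Fin r, k s.castSucc * (k s.castSucc - k (Fin.last r)) + k (Fin.last r) ^ 2

lemma qform_wRefl (i : Fin (r + 1)) (k : Fin (r + 1) → ℤ) :
    qform r (wRefl r i k) = qform r k := by
  induction i using Fin.lastCases with
  | last =>
    simp only [qform, wRefl_last_apply_castSucc, wRefl_last_apply_last, mul_sub,
      Finset.sum_sub_distrib, ← Finset.sum_mul]
    ring
  | cast t =>
    simp only [qform, wRefl_castSucc_apply_castSucc, wRefl_castSucc_apply_last]
    congr 1
    refine Finset.sum_congr rfl fun s _ => ?_
    split_ifs <;> ring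

lemma qform_apply_of_mem_weylW {w : Equiv.Perm (Fin (r + 1) → ℤ)} (hw : w ∈ weylW r)
    (k : Fin (r + 1) → ℤ) : qform r (w k) = qform r k := by
  induction hw using Subgroup.closure_induction generalizing k with
  | mem x hx => obtain ⟨i, rfl⟩ := hx; exact qform_wRefl i k
  | one => rfl
  | mul x y _ _ hx hy => rw [Equiv.Perm.mul_apply, hx, hy]
  | inv x _ hx => rw [← hx, Equiv.Perm.coe_inv, Equiv.apply_symm_apply]

lemma qform_eq_one_of_mem_realRoots {γ : Fin (r + 1) → ℤ} (hγ : γ ∈ realRoots r) :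
    qform r γ = 1 := by
  obtain ⟨w, hw, i, rfl⟩ := hγ
  rw [qform_apply_of_mem_weylW hw]
  induction i using Fin.lastCases with
  | last => simp [qform, Fin.castSucc_ne_last]
  | cast t => simp [qform, Pi.single_apply, (Fin.castSucc_ne_last _).symm]

end RealRoots

lemma Finset.exists_eq_ite_of_sum_sq_eq_one {ι : Type*} [DecidableEq ι] {J : Finset ι}
    {c : ι → ℤ} (hc : ∀ t ∈ J, 0 ≤ c t) (hsum : ∑ t ∈ J, c t ^ 2 = 1) :
    ∃ t ∈ J, ∀ s ∈ J, c s = if s = t then 1 else 0 := by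
  obtain ⟨t, ht, hct⟩ : ∃ t ∈ J, c t ≠ 0 := by
    by_contra! h
    rw [Finset.sum_eq_zero fun s hs => by rw [h s hs]; norm_num] at hsum
    exact zero_ne_one hsum
  have hsplit := Finset.add_sum_erase J (fun s => c s ^ 2) ht
  have hrest : 0 ≤ ∑ s ∈ J.erase t, c s ^ 2 := Finset.sum_nonneg fun s _ => sq_nonneg _
  have hct1 : c t = 1 := by nlinarith [hc t ht, Int.one_le_abs hct, sq_abs (c t)]
  have hrest0 : ∑ s ∈ J.erase t, c s ^ 2 = 0 := by simp only [hct1] at hsplit; linarith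
  refine ⟨t, ht, fun s hs => ?_⟩
  split_ifs with hst
  · rw [hst, hct1]
  · exact pow_eq_zero_iff two_ne_zero |>.mp <|
      (Finset.sum_eq_zero_iff_of_nonneg fun s _ => sq_nonneg (c s)).mp hrest0 s
        (Finset.mem_erase.mpr ⟨hst, hs⟩)

lemma inversion_coords_cases {ι : Type*} [DecidableEq ι] {J : Finset ι} {c : ι → ℤ}
    {a₁ a₂ a₃ m : ℤ} (h₁ : 0 ≤ a₁) (h₂ : 0 ≤ a₂) (h₃ : 0 ≤ a₃) (hm : 0 ≤ m)
    (hc : ∀ t ∈ J, m ≤ c t)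
    (hq : a₁ * (a₁ - m) + a₂ * (a₂ - m) + a₃ * (a₃ - m) + ∑ t ∈ J, c t * (c t - m) + m ^ 2 = 1)
    (hM : a₁ + a₂ + a₃ - m ≤ ∑ t ∈ J, (c t - m)) :
    (m = 0 ∧ a₁ = 0 ∧ a₂ = 0 ∧ a₃ = 0 ∧ ∃ t ∈ J, ∀ s ∈ J, c s = if s = t then 1 else 0) ∨
    (m = 1 ∧ (∀ t ∈ J, c t = 1) ∧ a₁ + a₂ + a₃ ≤ 1) := by
  have hD : 0 ≤ ∑ t ∈ J, (c t - m) := Finset.sum_nonneg fun t ht => by linarith [hc t ht]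
  have hDE : ∑ t ∈ J, (c t - m) ≤ ∑ t ∈ J, c t * (c t - m) :=
    Finset.sum_le_sum fun t ht => by nlinarith [hc t ht, Int.le_self_sq (c t)]
  -- `4 (a(a - m))` summed over the three `a`s is `∑ (2a - m)² - 3m²`, which leaves `m² ≤ 4`.
  have hm2 : m ≤ 2 := by
    nlinarith [sq_nonneg (2 * a₁ - m), sq_nonneg (2 * a₂ - m), sq_nonneg (2 * a₃ - m)]
  interval_cases m
  · simp only [sub_zero, ← sq] at hq hM hD hDE
    have ha : a₁ + a₂ + a₃ = 0 := by
      nlinarith [Int.le_self_sq a₁, Int.le_self_sq a₂, Int.le_self_sq a₃]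
    have hJsum : ∑ t ∈ J, c t ^ 2 = 1 := by nlinarith
    exact Or.inl ⟨rfl, by omega, by omega, by omega,
      Finset.exists_eq_ite_of_sum_sq_eq_one (fun t ht => by simpa using hc t ht) hJsum⟩
  · have hE : ∑ t ∈ J, c t * (c t - 1) = 0 := by
      nlinarith [Int.le_self_sq a₁, Int.le_self_sq a₂, Int.le_self_sq a₃]
    have hc1 : ∀ t ∈ J, c t - 1 = 0 :=
      (Finset.sum_eq_zero_iff_of_nonneg fun t ht => by linarith [hc t ht]).mp (by linarith)
    exact Or.inr ⟨rfl, fun t ht => by linarith [hc1 t ht], by linarith⟩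
  · nlinarith [sq_nonneg (2 * a₁ - 1), sq_nonneg (2 * a₂ - 1), sq_nonneg (2 * a₃ - 1)]

lemma Fintype.sum_eq_list_sum_add_sum {ι M : Type*} [Fintype ι] [DecidableEq ι]
    [AddCommMonoid M] {I : List ι} {J : Finset ι} (hI : I.Nodup) (hIJ : ∀ s ∈ I, s ∉ J)
    {f : ι → M} (hf : ∀ s, s ∉ I → s ∉ J → f s = 0) :
    ∑ s, f s = (I.map f).sum + ∑ s ∈ J, f s := by
  have hdisj : Disjoint I.toFinset J :=
    Finset.disjoint_left.mpr fun s hs => hIJ s (List.mem_toFinset.mp hs)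
  rw [← List.sum_toFinset f hI, ← Finset.sum_union hdisj]
  exact (Finset.sum_subset (Finset.subset_univ _) fun s _ hs => by
    simp only [Finset.mem_union, List.mem_toFinset, not_or] at hs
    exact hf s hs.1 hs.2).symm

section Walpha

variable {r : ℕ}

/-- The paper's `w_α` is `walpha r [j₁, j₂, j₃] J`. -/
noncomputable def walpha (r : ℕ) (I : List (Fin r)) (J : Finset (Fin r)) :
    Equiv.Perm (Fin (r + 1) → ℤ) :=
  reflProd r I * wRefl r (Fin.last r) * reflProd r J.toList

lemma walpha_mem_weylW (I : List (Fin r)) (J : Finset (Fin r)) : walpha r I J ∈ weylW r :=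
  mul_mem (mul_mem (reflProd_mem_weylW I) (wRefl_mem_weylW _)) (reflProd_mem_weylW _)

variable {I : List (Fin r)} {J : Finset (Fin r)}

lemma walpha_apply_last (k : Fin (r + 1) → ℤ) :
    walpha r I J k (Fin.last r) =
      ∑ s : Fin r, reflProd r J.toList k s.castSucc - k (Fin.last r) := by
  simp [walpha]

lemma walpha_apply_castSucc (hI : I.Nodup) (hIJ : ∀ s ∈ I, s ∉ J) (k : Fin (r + 1) → ℤ)
    (s : Fin r) :
    walpha r I J k s.castSucc =
      if s ∈ J then k (Fin.last r) - k s.castSucc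
      else if s ∈ I then walpha r I J k (Fin.last r) - k s.castSucc else k s.castSucc := by
  simp only [walpha, Equiv.Perm.mul_apply, reflProd_apply_castSucc hI,
    reflProd_apply_castSucc J.nodup_toList, Finset.mem_toList, reflProd_apply_last,
    wRefl_last_apply_castSucc]
  by_cases hsJ : s ∈ J
  · simp [hsJ, show s ∉ I from fun h => hIJ s h hsJ]
  · simp [hsJ]

lemma walpha_apply_last_of_support (hI : I.Nodup) (hIJ : ∀ s ∈ I, s ∉ J)
    {γ : Fin (r + 1) → ℤ} (hsupp : ∀ s, s ∉ I → s ∉ J → γ s.castSucc = 0) :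
    walpha r I J γ (Fin.last r) = (I.map fun s => γ s.castSucc).sum - γ (Fin.last r) -
      ∑ t ∈ J, (γ t.castSucc - γ (Fin.last r)) := by
  rw [walpha_apply_last, Fintype.sum_eq_list_sum_add_sum hI hIJ (f := fun s =>
    reflProd r J.toList γ s.castSucc) fun s hsI hsJ => by
      simp [reflProd_apply_castSucc J.nodup_toList, hsJ, hsupp s hsI hsJ]]
  simp only [reflProd_apply_castSucc J.nodup_toList, Finset.mem_toList]
  rw [Finset.sum_congr rfl fun t ht => if_pos ht,
    List.map_congr_left fun s hs => if_neg (hIJ s hs)]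
  simp only [Finset.sum_sub_distrib]
  ring

lemma walpha_nonpos_iff (hI : I.Nodup) (hIJ : ∀ s ∈ I, s ∉ J) {γ : Fin (r + 1) → ℤ}
    (hγ : ∀ l, 0 ≤ γ l) :
    (∀ l, walpha r I J γ l ≤ 0) ↔
      (∀ s, s ∉ I → s ∉ J → γ s.castSucc = 0) ∧ (∀ t ∈ J, γ (Fin.last r) ≤ γ t.castSucc) ∧
        (I.map fun s => γ s.castSucc).sum - γ (Fin.last r) ≤
          ∑ t ∈ J, (γ t.castSucc - γ (Fin.last r)) := by
  have hlast := walpha_apply_last_of_support hI hIJ (γ := γ)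
  constructor
  · intro hneg
    have hsupp : ∀ s, s ∉ I → s ∉ J → γ s.castSucc = 0 := fun s hsI hsJ =>
      le_antisymm (by simpa [walpha_apply_castSucc hI hIJ, hsI, hsJ] using hneg s.castSucc)
        (hγ _)
    refine ⟨hsupp, fun t ht => ?_, ?_⟩
    · simpa [walpha_apply_castSucc hI hIJ, ht] using hneg t.castSucc
    · linarith [hneg (Fin.last r), hlast hsupp]
  · rintro ⟨hsupp, hJ, hsum⟩ l
    induction l using Fin.lastCases with
    | last => linarith [hlast hsupp]
    | cast s =>
      rw [walpha_apply_castSucc hI hIJ]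
      split_ifs with hsJ hsI
      · linarith [hJ s hsJ]
      · linarith [hlast hsupp, hγ s.castSucc]
      · exact (hsupp s hsI hsJ).le

end Walpha

section Roots

variable {r : ℕ}

def betaRoot (r : ℕ) (J : Finset (Fin r)) : Fin (r + 1) → ℤ :=
  ∑ j ∈ J, Pi.single j.castSucc 1 + Pi.single (Fin.last r) 1

@[simp]
lemma betaRoot_apply_castSucc (J : Finset (Fin r)) (s : Fin r) :
    betaRoot r J s.castSucc = if s ∈ J then 1 else 0 := by
  simp [betaRoot, Finset.sum_apply, Pi.single_apply, Fin.castSucc_ne_last]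

@[simp]
lemma betaRoot_apply_last (J : Finset (Fin r)) : betaRoot r J (Fin.last r) = 1 := by
  simp [betaRoot, Finset.sum_apply, (Fin.castSucc_ne_last _).symm]

lemma betaRoot_nonneg (J : Finset (Fin r)) : 0 ≤ betaRoot r J :=
  add_nonneg (Finset.sum_nonneg fun _ _ => Pi.single_nonneg.mpr zero_le_one)
    (Pi.single_nonneg.mpr zero_le_one)

lemma betaRoot_eq_reflProd (J : Finset (Fin r)) :
    betaRoot r J = reflProd r J.toList (Pi.single (Fin.last r) 1) := by
  funext l
  induction l using Fin.lastCases with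
  | last => simp
  | cast s => simp [reflProd_apply_castSucc J.nodup_toList, Fin.castSucc_ne_last]

lemma betaRoot_mem_realRoots (J : Finset (Fin r)) : betaRoot r J ∈ realRoots r := by
  rw [betaRoot_eq_reflProd]
  exact apply_mem_realRoots (reflProd_mem_weylW _) (single_mem_realRoots _)

lemma betaRoot_add_single_mem_realRoots {J : Finset (Fin r)} {j : Fin r} (hj : j ∉ J) :
    betaRoot r J + Pi.single j.castSucc 1 ∈ realRoots r := by
  have : betaRoot r J + Pi.single j.castSucc 1 = wRefl r j.castSucc (betaRoot r J) := by
    funext l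
    induction l using Fin.lastCases with
    | last => simp [(Fin.castSucc_ne_last _).symm]
    | cast s => rcases eq_or_ne s j with rfl | hs <;> simp [*]
  rw [this]
  exact apply_mem_realRoots (wRefl_mem_weylW _) (betaRoot_mem_realRoots J)

def alphaRoot (r : ℕ) (j₁ j₂ j₃ : Fin r) (J : Finset (Fin r)) : Fin (r + 1) → ℤ :=
  Pi.single j₁.castSucc 1 + Pi.single j₂.castSucc 1 + Pi.single j₃.castSucc 1 +
    (2 : ℤ) • (∑ j ∈ J, Pi.single j.castSucc (1 : ℤ)) + (2 : ℤ) • Pi.single (Fin.last r) (1 : ℤ)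

@[simp]
lemma alphaRoot_apply_castSucc (j₁ j₂ j₃ : Fin r) (J : Finset (Fin r)) (s : Fin r) :
    alphaRoot r j₁ j₂ j₃ J s.castSucc = (if s = j₁ then 1 else 0) + (if s = j₂ then 1 else 0) +
      (if s = j₃ then 1 else 0) + if s ∈ J then 2 else 0 := by
  simp [alphaRoot, Finset.sum_apply, Pi.single_apply, Fin.castSucc_ne_last]

@[simp]
lemma alphaRoot_apply_last (j₁ j₂ j₃ : Fin r) (J : Finset (Fin r)) :
    alphaRoot r j₁ j₂ j₃ J (Fin.last r) = 2 := by
  simp [alphaRoot, Finset.sum_apply, (Fin.castSucc_ne_last _).symm]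

lemma walpha_apply_alphaRoot {J : Finset (Fin r)} {j₁ j₂ j₃ : Fin r} (h₁₂ : j₁ ≠ j₂)
    (h₁₃ : j₁ ≠ j₃) (h₂₃ : j₂ ≠ j₃) (hj₁ : j₁ ∉ J) (hj₂ : j₂ ∉ J) (hj₃ : j₃ ∉ J) :
    walpha r [j₁, j₂, j₃] J (alphaRoot r j₁ j₂ j₃ J) = Pi.single (Fin.last r) 1 := by
  have hI : [j₁, j₂, j₃].Nodup := by simp [*]
  have hIJ : ∀ s ∈ [j₁, j₂, j₃], s ∉ J := by simp [*]
  have hJI (s) (hs : s ∈ J) : s ≠ j₁ ∧ s ≠ j₂ ∧ s ≠ j₃ :=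
    ⟨ne_of_mem_of_not_mem hs hj₁, ne_of_mem_of_not_mem hs hj₂, ne_of_mem_of_not_mem hs hj₃⟩
  have hsupp : ∀ s, s ∉ [j₁, j₂, j₃] → s ∉ J → alphaRoot r j₁ j₂ j₃ J s.castSucc = 0 := by
    simp +contextual
  have hlast := walpha_apply_last_of_support hI hIJ hsupp
  simp +contextual [hJI, h₁₂, h₁₃, h₂₃, h₁₂.symm, h₁₃.symm, h₂₃.symm, hj₁, hj₂, hj₃] at hlast
  funext l
  induction l using Fin.lastCases with
  | last => simpa using hlast
  | cast s =>
    rw [walpha_apply_castSucc hI hIJ, hlast]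
    obtain rfl | rfl | rfl | ⟨hs₁, hs₂, hs₃⟩ :
        s = j₁ ∨ s = j₂ ∨ s = j₃ ∨ (s ≠ j₁ ∧ s ≠ j₂ ∧ s ≠ j₃) := by tauto
    all_goals simp +contextual [Fin.castSucc_ne_last, h₁₂.symm, h₁₃.symm, h₂₃.symm, *]

end Roots

section Inversions

variable {r : ℕ} {I : List (Fin r)} {J : Finset (Fin r)}

lemma eq_of_eq_on_support {γ v : Fin (r + 1) → ℤ}
    (hγ : ∀ s, s ∉ I → s ∉ J → γ s.castSucc = 0) (hv : ∀ s, s ∉ I → s ∉ J → v s.castSucc = 0)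
    (hI : ∀ s ∈ I, γ s.castSucc = v s.castSucc) (hJ : ∀ s ∈ J, γ s.castSucc = v s.castSucc)
    (hlast : γ (Fin.last r) = v (Fin.last r)) : γ = v := by
  funext l
  induction l using Fin.lastCases with
  | last => exact hlast
  | cast s =>
    by_cases hsI : s ∈ I
    · exact hI s hsI
    by_cases hsJ : s ∈ J
    · exact hJ s hsJ
    rw [hγ s hsI hsJ, hv s hsI hsJ]

variable {j₁ j₂ j₃ : Fin r}

def walphaInversions (r : ℕ) (j₁ j₂ j₃ : Fin r) (J : Finset (Fin r)) :
    Set (Fin (r + 1) → ℤ) :=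
  (fun j : Fin r => (Pi.single j.castSucc 1 : Fin (r + 1) → ℤ)) '' ↑J ∪
    {betaRoot r J, betaRoot r J + Pi.single j₁.castSucc 1,
      betaRoot r J + Pi.single j₂.castSucc 1, betaRoot r J + Pi.single j₃.castSucc 1}

lemma mem_walphaInversions_of_walpha_nonpos (h₁₂ : j₁ ≠ j₂) (h₁₃ : j₁ ≠ j₃) (h₂₃ : j₂ ≠ j₃)
    (hj₁ : j₁ ∉ J) (hj₂ : j₂ ∉ J) (hj₃ : j₃ ∉ J) {γ : Fin (r + 1) → ℤ}
    (hroot : γ ∈ realRoots r) (hγ : ∀ l, 0 ≤ γ l)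
    (hneg : ∀ l, walpha r [j₁, j₂, j₃] J γ l ≤ 0) :
    γ ∈ walphaInversions r j₁ j₂ j₃ J := by
  have hI : [j₁, j₂, j₃].Nodup := by simp [*]
  have hIJ : ∀ s ∈ [j₁, j₂, j₃], s ∉ J := by simp [*]
  have hJI (s) (hs : s ∈ J) : s ≠ j₁ ∧ s ≠ j₂ ∧ s ≠ j₃ :=
    ⟨ne_of_mem_of_not_mem hs hj₁, ne_of_mem_of_not_mem hs hj₂, ne_of_mem_of_not_mem hs hj₃⟩
  obtain ⟨hsupp, hJ, hM⟩ := (walpha_nonpos_iff hI hIJ hγ).mp hneg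
  have hq := qform_eq_one_of_mem_realRoots hroot
  rw [qform, Fintype.sum_eq_list_sum_add_sum hI hIJ fun s hsI hsJ => by
    simp [hsupp s hsI hsJ]] at hq
  simp only [List.map_cons, List.map_nil, List.sum_cons, List.sum_nil, add_zero,
    ← add_assoc] at hq hM
  rcases inversion_coords_cases (hγ j₁.castSucc) (hγ j₂.castSucc) (hγ j₃.castSucc)
      (hγ _) hJ hq hM with ⟨hm, h₁, h₂, h₃, t, ht, hc⟩ | ⟨hm, hc, ha⟩
  · obtain ⟨ht₁, ht₂, ht₃⟩ := hJI t ht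
    refine Or.inl ⟨t, ht, eq_of_eq_on_support (I := [j₁, j₂, j₃]) (J := J) ?_ hsupp ?_ ?_ ?_⟩
    · intro s hsI hsJ
      simp [show s ≠ t by rintro rfl; exact hsJ ht]
    · simp [Pi.single_apply, h₁, h₂, h₃, ht₁.symm, ht₂.symm, ht₃.symm]
    · intro s hs
      simp [hc s hs, Pi.single_apply, eq_comm]
    · simp [hm, (Fin.castSucc_ne_last _).symm]
  · have hγeq : γ = betaRoot r J + γ j₁.castSucc • Pi.single j₁.castSucc 1 +
        γ j₂.castSucc • Pi.single j₂.castSucc 1 + γ j₃.castSucc • Pi.single j₃.castSucc 1 := by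
      refine eq_of_eq_on_support hsupp ?_ ?_ ?_ ?_ <;>
        simp +contextual [Pi.single_apply, (Fin.castSucc_ne_last _).symm, hm, hc,
          h₁₂, h₁₃, h₂₃, h₁₂.symm, h₁₃.symm, h₂₃.symm, hj₁, hj₂, hj₃, hJI]
    have := hγ j₁.castSucc; have := hγ j₂.castSucc; have := hγ j₃.castSucc
    obtain ⟨h₁, h₂, h₃⟩ | ⟨h₁, h₂, h₃⟩ | ⟨h₁, h₂, h₃⟩ | ⟨h₁, h₂, h₃⟩ :
        (γ j₁.castSucc = 0 ∧ γ j₂.castSucc = 0 ∧ γ j₃.castSucc = 0) ∨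
        (γ j₁.castSucc = 1 ∧ γ j₂.castSucc = 0 ∧ γ j₃.castSucc = 0) ∨
        (γ j₁.castSucc = 0 ∧ γ j₂.castSucc = 1 ∧ γ j₃.castSucc = 0) ∨
        (γ j₁.castSucc = 0 ∧ γ j₂.castSucc = 0 ∧ γ j₃.castSucc = 1) := by omega
    all_goals rw [hγeq]; simp [walphaInversions, h₁, h₂, h₃]

lemma walpha_nonpos_of_mem_walphaInversions (h₁₂ : j₁ ≠ j₂) (h₁₃ : j₁ ≠ j₃) (h₂₃ : j₂ ≠ j₃)
    (hj₁ : j₁ ∉ J) (hj₂ : j₂ ∉ J) (hj₃ : j₃ ∉ J) {γ : Fin (r + 1) → ℤ}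
    (hγ : γ ∈ walphaInversions r j₁ j₂ j₃ J) :
    γ ∈ realRoots r ∧ (∀ l, 0 ≤ γ l) ∧ ∀ l, walpha r [j₁, j₂, j₃] J γ l ≤ 0 := by
  have hI : [j₁, j₂, j₃].Nodup := by simp [*]
  have hIJ : ∀ s ∈ [j₁, j₂, j₃], s ∉ J := by simp [*]
  have hJI (s) (hs : s ∈ J) : s ≠ j₁ ∧ s ≠ j₂ ∧ s ≠ j₃ :=
    ⟨ne_of_mem_of_not_mem hs hj₁, ne_of_mem_of_not_mem hs hj₂, ne_of_mem_of_not_mem hs hj₃⟩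
  rcases hγ with ⟨t, ht, rfl⟩ | hγ
  · rw [Finset.mem_coe] at ht
    have hJt (s) (hs : s ∉ J) : s ≠ t := (ne_of_mem_of_not_mem ht hs).symm
    obtain ⟨ht₁, ht₂, ht₃⟩ := hJI t ht
    have hpos : 0 ≤ (Pi.single t.castSucc 1 : Fin (r + 1) → ℤ) :=
      Pi.single_nonneg.mpr zero_le_one
    refine ⟨single_mem_realRoots _, hpos, (walpha_nonpos_iff hI hIJ hpos).mpr ⟨?_, ?_, ?_⟩⟩
    all_goals simp +contextual [Pi.single_apply, (Fin.castSucc_ne_last _).symm, ht, hJt,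
      ht₁.symm, ht₂.symm, ht₃.symm, apply_ite]
  · simp only [Set.mem_insert_iff, Set.mem_singleton_iff] at hγ
    have hpos (a : Fin r) : 0 ≤ betaRoot r J + Pi.single a.castSucc 1 :=
      add_nonneg (betaRoot_nonneg J) (Pi.single_nonneg.mpr zero_le_one)
    obtain rfl | rfl | rfl | rfl := hγ
    · refine ⟨betaRoot_mem_realRoots J, betaRoot_nonneg J,
        (walpha_nonpos_iff hI hIJ (betaRoot_nonneg J)).mpr ⟨?_, ?_, ?_⟩⟩
      all_goals simp +contextual [hj₁, hj₂, hj₃]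
    all_goals refine ⟨betaRoot_add_single_mem_realRoots ‹_›, hpos _,
        (walpha_nonpos_iff hI hIJ (hpos _)).mpr ⟨?_, ?_, ?_⟩⟩
    all_goals simp +contextual [Pi.single_apply, (Fin.castSucc_ne_last _).symm, hJI,
      h₁₂, h₁₃, h₂₃, h₁₂.symm, h₁₃.symm, h₂₃.symm, hj₁, hj₂, hj₃]

@[simp]
lemma single_castSucc_inj {i j : Fin r} :
    (Pi.single i.castSucc 1 : Fin (r + 1) → ℤ) = Pi.single j.castSucc 1 ↔ i = j := by
  refine ⟨fun h => ?_, fun h => h ▸ rfl⟩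
  simpa [Pi.single_apply] using congrFun h i.castSucc

lemma ncard_walphaInversions (h₁₂ : j₁ ≠ j₂) (h₁₃ : j₁ ≠ j₃) (h₂₃ : j₂ ≠ j₃) :
    (walphaInversions r j₁ j₂ j₃ J).ncard = J.card + 4 := by
  have hinj : Function.Injective fun j : Fin r => (Pi.single j.castSucc 1 : Fin (r + 1) → ℤ) :=
    fun _ _ h => single_castSucc_inj.mp h
  have hdisj : Disjoint ((fun j : Fin r => (Pi.single j.castSucc 1 : Fin (r + 1) → ℤ)) '' ↑J)
      {betaRoot r J, betaRoot r J + Pi.single j₁.castSucc 1,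
        betaRoot r J + Pi.single j₂.castSucc 1, betaRoot r J + Pi.single j₃.castSucc 1} := by
    refine Set.disjoint_left.mpr ?_
    rintro _ ⟨t, -, rfl⟩ h
    simp only [Set.mem_insert_iff, Set.mem_singleton_iff] at h
    -- the `e_t` have last coordinate `0`, the others `1`
    rcases h with h | h | h | h <;>
      simpa [(Fin.castSucc_ne_last _).symm] using congrFun h (Fin.last r)
  rw [walphaInversions, Set.ncard_union_eq hdisj (J.finite_toSet.image _) (Set.toFinite _),
    Set.ncard_image_of_injective _ hinj, Set.ncard_coe_finset, Set.ncard_insert_of_notMem,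
    Set.ncard_insert_of_notMem, Set.ncard_pair]
  all_goals simp [h₁₂, h₁₃, h₂₃]

end Inversions

theorem walpha_inversions_general (r : ℕ) (j₁ j₂ j₃ : Fin r)
    (h12 : j₁ < j₂) (h23 : j₂ < j₃)
    (J : Finset (Fin r)) (hJ1 : j₁ ∉ J) (hJ2 : j₂ ∉ J) (hJ3 : j₃ ∉ J)
    (α β : Fin (r + 1) → ℤ)
    (hα : α = Pi.single j₁.castSucc 1 + Pi.single j₂.castSucc 1 + Pi.single j₃.castSucc 1
            + (2 : ℤ) • (∑ j ∈ J, Pi.single j.castSucc (1 : ℤ))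
            + (2 : ℤ) • Pi.single (Fin.last r) (1 : ℤ))
    (hβ : β = (∑ j ∈ J, Pi.single j.castSucc (1 : ℤ)) + Pi.single (Fin.last r) (1 : ℤ))
    (wα : Equiv.Perm (Fin (r + 1) → ℤ))
    (hwα : wα = wRefl r j₁.castSucc * wRefl r j₂.castSucc * wRefl r j₃.castSucc
              * wRefl r (Fin.last r) * (J.toList.map fun j => wRefl r j.castSucc).prod) :
    (∀ i ∈ J, ∀ j ∈ J, Commute (wRefl r i.castSucc) (wRefl r j.castSucc)) ∧
    wα α = Pi.single (Fin.last r) 1 ∧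
    {γ : Fin (r + 1) → ℤ | (γ ∈ realRoots r ∧ ∀ j, 0 ≤ γ j) ∧
        (wα γ ∈ realRoots r ∧ ∀ j, wα γ j ≤ 0)} =
      ((fun j : Fin r => (Pi.single j.castSucc 1 : Fin (r + 1) → ℤ)) '' ↑J) ∪
        {β, β + Pi.single j₁.castSucc 1, β + Pi.single j₂.castSucc 1,
          β + Pi.single j₃.castSucc 1} ∧
    (((fun j : Fin r => (Pi.single j.castSucc 1 : Fin (r + 1) → ℤ)) '' ↑J) ∪
        {β, β + Pi.single j₁.castSucc 1, β + Pi.single j₂.castSucc 1,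
          β + Pi.single j₃.castSucc 1}).ncard = J.card + 4 := by
  have h₁₂ : j₁ ≠ j₂ := h12.ne
  have h₁₃ : j₁ ≠ j₃ := (h12.trans h23).ne
  have h₂₃ : j₂ ≠ j₃ := h23.ne
  obtain rfl : α = alphaRoot r j₁ j₂ j₃ J := hα
  obtain rfl : β = betaRoot r J := hβ
  obtain rfl : wα = walpha r [j₁, j₂, j₃] J := by simp [hwα, walpha, reflProd, mul_assoc]
  refine ⟨fun i _ j _ => wRefl_castSucc_commute i j,
    walpha_apply_alphaRoot h₁₂ h₁₃ h₂₃ hJ1 hJ2 hJ3, ?_, ncard_walphaInversions h₁₂ h₁₃ h₂₃⟩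
  ext γ
  exact ⟨fun ⟨⟨hroot, hpos⟩, _, hneg⟩ =>
      mem_walphaInversions_of_walpha_nonpos h₁₂ h₁₃ h₂₃ hJ1 hJ2 hJ3 hroot hpos hneg,
    fun hγ =>
      have ⟨hroot, hpos, hneg⟩ := walpha_nonpos_of_mem_walphaInversions h₁₂ h₁₃ h₂₃ hJ1 hJ2 hJ3 hγ
      ⟨⟨hroot, hpos⟩, apply_mem_realRoots (walpha_mem_weylW _ _) hroot, hneg⟩⟩

/-- For `α = e_{j₁} + e_{j₂} + e_{j₃} + 2∑_{j∈J} e_j + 2e_{r+1} ∈ Φ₂` and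
`w_α = w_{j₁} w_{j₂} w_{j₃} w_{r+1} ∏_{j∈J} w_j` (the factors `w_j`, `j ∈ J`, pairwise
commute), one has `w_α(α) = e_{r+1}`, and the set of positive real roots sent by `w_α` to
negative real roots is exactly `{e_j : j ∈ J} ∪ {β, β + e_{j₁}, β + e_{j₂}, β + e_{j₃}}`
where `β = ∑_{j∈J} e_j + e_{r+1}`, a set with `|J| + 4` elements. -/
theorem walpha_inversions (r : ℕ) (hr : 3 ≤ r) (j₁ j₂ j₃ : Fin r)
    (h12 : j₁ < j₂) (h23 : j₂ < j₃)
    (J : Finset (Fin r)) (hJ1 : j₁ ∉ J) (hJ2 : j₂ ∉ J) (hJ3 : j₃ ∉ J)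
    (α β : Fin (r + 1) → ℤ)
    (hα : α = Pi.single j₁.castSucc 1 + Pi.single j₂.castSucc 1 + Pi.single j₃.castSucc 1
            + (2 : ℤ) • (∑ j ∈ J, Pi.single j.castSucc (1 : ℤ))
            + (2 : ℤ) • Pi.single (Fin.last r) (1 : ℤ))
    (hβ : β = (∑ j ∈ J, Pi.single j.castSucc (1 : ℤ)) + Pi.single (Fin.last r) (1 : ℤ))
    (wα : Equiv.Perm (Fin (r + 1) → ℤ))
    (hwα : wα = wRefl r j₁.castSucc * wRefl r j₂.castSucc * wRefl r j₃.castSucc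
              * wRefl r (Fin.last r) * (J.toList.map fun j => wRefl r j.castSucc).prod) :
    (∀ i ∈ J, ∀ j ∈ J, Commute (wRefl r i.castSucc) (wRefl r j.castSucc)) ∧
    wα α = Pi.single (Fin.last r) 1 ∧
    {γ : Fin (r + 1) → ℤ | (γ ∈ realRoots r ∧ ∀ j, 0 ≤ γ j) ∧
        (wα γ ∈ realRoots r ∧ ∀ j, wα γ j ≤ 0)} =
      ((fun j : Fin r => (Pi.single j.castSucc 1 : Fin (r + 1) → ℤ)) '' ↑J) ∪
        {β, β + Pi.single j₁.castSucc 1, β + Pi.single j₂.castSucc 1,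
          β + Pi.single j₃.castSucc 1} ∧
    (((fun j : Fin r => (Pi.single j.castSucc 1 : Fin (r + 1) → ℤ)) '' ↑J) ∪
        {β, β + Pi.single j₁.castSucc 1, β + Pi.single j₂.castSucc 1,
          β + Pi.single j₃.castSucc 1}).ncard = J.card + 4 :=
  walpha_inversions_general r j₁ j₂ j₃ h12 h23 J hJ1 hJ2 hJ3 α β hα hβ wα hwα
end
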